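/- arXiv:math/0312187 — 5 statements merged into one kernel-verified Lean document; each statement's English description precedes it below -/
import Mathlib

section
/- Fix positive integers M, N, V with M ≥ 2, probabilities P_1, ..., P_N ≥ 0 summing to 1, and let ρ and ρ_V be as defined. Then the Monge–Kantorovich distance on P(Ω) satisfies d_P(ρ_V, ρ) ≤ 2·(M/V)^{1/4}. In particular ρ_V → ρ in the Monge–Kantorovich metric as V → ∞. -/
open Metric MeasureTheory Filter Set TopologicalSpace
def CodeTree (M N : ℕ) := List (Fin M) → Fin N

lemma codetree_exists_disagree {M N : ℕ} {ω κ : CodeTree M N} (h : ω ≠ κ) :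
    ∃ n : ℕ, ∃ i : List (Fin M), i.length = n ∧ ω i ≠ κ i := by
  obtain ⟨i, hi⟩ := Function.ne_iff.mp h
  exact ⟨i.length, i, rfl, hi⟩

open scoped Classical in
noncomputable def treeDist {M N : ℕ} (ω κ : CodeTree M N) : ℝ :=
  if h : ω = κ then 0
  else (1 / (M : ℝ)) ^ Nat.find (codetree_exists_disagree h)

section
open scoped Classical

variable {M N : ℕ}

lemma treeDist_nonneg (a b : CodeTree M N) : 0 ≤ treeDist a b := by
  unfold treeDist
  by_cases h : a = b
  · simp [h]
  · rw [dif_neg h]; positivity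

lemma treeDist_comm (ω κ : CodeTree M N) : treeDist ω κ = treeDist κ ω := by
  unfold treeDist
  by_cases h : ω = κ
  · subst h; simp
  · rw [dif_neg h, dif_neg (Ne.symm h)]
    congr 1
    exact le_antisymm
      (Nat.find_mono fun n => fun ⟨i, hl, hne⟩ => ⟨i, hl, hne.symm⟩)
      (Nat.find_mono fun n => fun ⟨i, hl, hne⟩ => ⟨i, hl, hne.symm⟩)

lemma treeDist_triangle [NeZero M] (x y z : CodeTree M N) :
    treeDist x y ≤ treeDist x z + treeDist z y := by
  have hMpos : (0 : ℕ) < M := Nat.pos_of_ne_zero (NeZero.ne M)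
  have hM : (0 : ℝ) < 1 / (M : ℝ) := by positivity
  have hM1 : (1 / (M : ℝ)) ≤ 1 := by
    rw [div_le_one (by exact_mod_cast hMpos)]
    exact_mod_cast hMpos
  by_cases hxy : x = y
  · rw [show treeDist x y = 0 by rw [hxy]; simp [treeDist]]
    exact add_nonneg (treeDist_nonneg _ _) (treeDist_nonneg _ _)
  by_cases hxz : x = z
  · subst hxz
    rw [show treeDist x x = 0 by simp [treeDist], zero_add]
  by_cases hzy : z = y
  · subst hzy
    rw [show treeDist z z = 0 by simp [treeDist], add_zero]
  -- all distinct
  have key : Nat.find (codetree_exists_disagree hxz) ≤ Nat.find (codetree_exists_disagree hxy)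
      ∨ Nat.find (codetree_exists_disagree hzy) ≤ Nat.find (codetree_exists_disagree hxy) := by
    obtain ⟨i, hlen, hne⟩ := Nat.find_spec (codetree_exists_disagree hxy)
    by_cases h : x i = z i
    · right
      exact Nat.find_le ⟨i, hlen, by rw [← h]; exact hne⟩
    · left
      exact Nat.find_le ⟨i, hlen, h⟩
  rw [treeDist, dif_neg hxy, treeDist, dif_neg hxz, treeDist, dif_neg hzy]
  rcases key with h | h
  · calc (1 / (M:ℝ)) ^ Nat.find (codetree_exists_disagree hxy)
        ≤ (1 / (M:ℝ)) ^ Nat.find (codetree_exists_disagree hxz) :=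
          pow_le_pow_of_le_one (le_of_lt hM) hM1 h
      _ ≤ _ := le_add_of_nonneg_right (by positivity)
  · calc (1 / (M:ℝ)) ^ Nat.find (codetree_exists_disagree hxy)
        ≤ (1 / (M:ℝ)) ^ Nat.find (codetree_exists_disagree hzy) :=
          pow_le_pow_of_le_one (le_of_lt hM) hM1 h
      _ ≤ _ := le_add_of_nonneg_left (by positivity)

lemma treeDist_eq_zero [NeZero M] {x y : CodeTree M N} (h : treeDist x y = 0) : x = y := by
  by_contra hne
  have hMpos : (0 : ℕ) < M := Nat.pos_of_ne_zero (NeZero.ne M)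
  have hM : (0 : ℝ) < 1 / (M : ℝ) := by positivity
  rw [treeDist, dif_neg hne] at h
  exact (pow_pos hM _).ne' h

end

noncomputable instance {M N : ℕ} [NeZero M] : MetricSpace (CodeTree M N) where
  dist := treeDist
  dist_self := fun ω => by simp [treeDist]
  dist_comm := treeDist_comm
  dist_triangle := fun a b c => treeDist_triangle a c b
  eq_of_dist_eq_zero := treeDist_eq_zero

noncomputable instance {M N : ℕ} [NeZero M] : MeasurableSpace (CodeTree M N) := borel _
instance {M N : ℕ} [NeZero M] : BorelSpace (CodeTree M N) := ⟨rfl⟩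

/-- The index set `A = ({1,…,N} × {1,…,V}^M)^V`; `(a v).1` is the IFS number `n_v`
and `(a v).2 m` is the limb label `v_{v,m}`. -/
abbrev IdxA (M N V : ℕ) := Fin V → Fin N × (Fin M → Fin V)

/-- The shift `ξ_n : Ω^M → Ω`: bottom node labelled `n`, attached to the `M` given trees. -/
def xi {M N : ℕ} (n : Fin N) (ω : Fin M → CodeTree M N) : CodeTree M N :=
  fun i => match i with
  | [] => n
  | m :: j => ω m j

/-- The map `η^a : Ω^V → Ω^V`. -/
def eta {M N V : ℕ} (a : IdxA M N V) (ω : Fin V → CodeTree M N) : Fin V → CodeTree M N :=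
  fun v => xi (a v).1 fun m => ω ((a v).2 m)

/-- The probability `ρ([τ]) = ∏_{|i| ≤ k} P_{τ(i)}` of the level-`k` cylinder set of a
code tree `τ`, under i.i.d. node labels with `Pr(label = n) = P_n`. -/
noncomputable def cylProb {M N : ℕ} (P : Fin N → NNReal) : ℕ → CodeTree M N → ENNReal
  | 0, τ => (P (τ []) : ENNReal)
  | k + 1, τ => (P (τ []) : ENNReal) * ∏ m : Fin M, cylProb P k (fun j => τ (m :: j))

/-- The probability `P^a = P_{n₁}⋯P_{n_V} / V^{MV}` attached to the map `η^a`. -/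
noncomputable def probA {M N V : ℕ} (P : Fin N → NNReal) (a : IdxA M N V) : ENNReal :=
  (∏ v : Fin V, (P ((a v).1) : ENNReal)) / (V : ENNReal) ^ (M * V)

/-- The Monge–Kantorovich metric on measures. -/
noncomputable def MKdist {Y : Type*} [MeasurableSpace Y] [MetricSpace Y]
    (μ ν : Measure Y) : ℝ :=
  ⨆ f : {g : Y → ℝ // LipschitzWith 1 g}, ((∫ x, f.1 x ∂μ) - (∫ x, f.1 x ∂ν))

/-!
Unrolling the invariance of `μ_V` through `k + 1` generations writes `ρ_V` on level-`k` cylinders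
as the law of the labels produced by `k + 1` independent random maps `η^a`: the node at address
`i` carries the label `n` of the tree of generation `|i|` from which it descends, and that tree is
selected by the uniformly random limb labels. As long as the nodes of a level descend from
distinct trees, their labels are independent with law `P`, exactly as under `ρ`. Coupling the two
laws by drawing fresh labels on every level where two nodes share an ancestor tree, a 1-Lipschitz
test function moves by at most `M^{-l}`, `l` the first such level; and a first collision at level
`l` has probability at most `M^{2l} / V`, since each of the `M^{2l}` pairs of nodes of that level
is glued from distinct parents by an independent uniform limb label. Adding the error `M^{-(k+1)}`
of replacing integrals by sums over level-`k` cylinders, letting `k → ∞`, and choosing the level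
`j` with `M^{-(j+1)} ≤ (M/V)^{1/4} < M^{-j}` gives `d_P(ρ_V, ρ) ≤ 2 (M/V)^{1/4}`.
-/

abbrev Node (M k : ℕ) := {i : List (Fin M) // i.length ≤ k}

noncomputable instance (M k : ℕ) : Fintype (Node M k) :=
  (List.finite_length_le (Fin M) k).fintype

abbrev Pattern (M N k : ℕ) := Node M k → Fin N

namespace CodeTree

variable {M N : ℕ}

def cyl (k : ℕ) (τ : CodeTree M N) : Set (CodeTree M N) :=
  {σ | ∀ i : List (Fin M), i.length ≤ k → σ i = τ i}

def toPattern (k : ℕ) (ω : CodeTree M N) : Pattern M N k := fun i => ω i.1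

def ofPattern {k : ℕ} (c : Pattern M N k) : CodeTree M N :=
  fun i => c ⟨i.take k, by rw [List.length_take]; omega⟩

lemma ofPattern_apply {k : ℕ} (c : Pattern M N k) {i : List (Fin M)} (hi : i.length ≤ k) :
    ofPattern c i = c ⟨i, hi⟩ := by
  simp only [ofPattern, List.take_of_length_le hi]

lemma mem_cyl_ofPattern {k : ℕ} {c : Pattern M N k} {σ : CodeTree M N} :
    σ ∈ cyl k (ofPattern c) ↔ toPattern k σ = c := by
  simp only [cyl, mem_ofPred_eq, funext_iff, Subtype.forall]
  exact forall₂_congr fun i hi => by rw [ofPattern_apply c hi, toPattern]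

variable [NeZero M]

lemma one_div_cast_pos : (0 : ℝ) < 1 / M := by
  have : (0 : ℝ) < M := by exact_mod_cast Nat.pos_of_ne_zero (NeZero.ne M)
  positivity

lemma one_div_cast_le_one : (1 : ℝ) / M ≤ 1 :=
  div_le_one_of_le₀ (by exact_mod_cast Nat.one_le_iff_ne_zero.mpr (NeZero.ne M)) (by positivity)

lemma one_div_cast_lt_one (hM : 2 ≤ M) : (1 : ℝ) / M < 1 :=
  (div_lt_one (by exact_mod_cast Nat.pos_of_ne_zero (NeZero.ne M))).mpr (by exact_mod_cast hM)

lemma one_div_cast_pow_le_pow {a b : ℕ} (h : a ≤ b) :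
    (1 / (M : ℝ)) ^ b ≤ (1 / (M : ℝ)) ^ a :=
  pow_le_pow_of_le_one one_div_cast_pos.le one_div_cast_le_one h

lemma exists_dist_eq_pow {ω κ : CodeTree M N} (h : ω ≠ κ) :
    ∃ i, ω i ≠ κ i ∧ dist ω κ = (1 / (M : ℝ)) ^ i.length := by
  classical
  obtain ⟨i, hlen, hne⟩ := Nat.find_spec (codetree_exists_disagree h)
  refine ⟨i, hne, ?_⟩
  rw [hlen]
  show treeDist ω κ = _
  rw [treeDist, dif_neg h]

lemma pow_le_dist {ω κ : CodeTree M N} {i : List (Fin M)} (h : ω i ≠ κ i) :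
    (1 / (M : ℝ)) ^ i.length ≤ dist ω κ := by
  classical
  have hωκ : ω ≠ κ := fun e => h (by rw [e])
  show _ ≤ treeDist ω κ
  rw [treeDist, dif_neg hωκ]
  exact one_div_cast_pow_le_pow (Nat.find_le ⟨i, rfl, h⟩)

lemma dist_le_of_agree {ω κ : CodeTree M N} {k : ℕ}
    (h : ∀ i : List (Fin M), i.length ≤ k → ω i = κ i) :
    dist ω κ ≤ (1 / (M : ℝ)) ^ (k + 1) := by
  by_cases hωκ : ω = κ
  · rw [hωκ, dist_self]
    positivity
  obtain ⟨i, hne, hdist⟩ := exists_dist_eq_pow hωκ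
  rw [hdist]
  exact one_div_cast_pow_le_pow (not_le.mp fun hi => hne (h i hi))

lemma agree_of_dist_lt {ω κ : CodeTree M N} {k : ℕ} (h : dist ω κ < (1 / (M : ℝ)) ^ k)
    (i : List (Fin M)) (hi : i.length ≤ k) : ω i = κ i := by
  by_contra hne
  exact (one_div_cast_pow_le_pow hi).not_gt (h.trans_le' (pow_le_dist hne))

lemma dist_le_one (ω κ : CodeTree M N) : dist ω κ ≤ 1 := by
  by_cases hωκ : ω = κ
  · rw [hωκ, dist_self]
    exact zero_le_one
  obtain ⟨i, -, hdist⟩ := exists_dist_eq_pow hωκ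
  rw [hdist]
  exact pow_le_one₀ one_div_cast_pos.le one_div_cast_le_one

lemma cyl_eq_ball (hM : 2 ≤ M) (k : ℕ) (τ : CodeTree M N) :
    cyl k τ = ball τ ((1 / (M : ℝ)) ^ k) := by
  have hlt : (1 / (M : ℝ)) ^ (k + 1) < (1 / (M : ℝ)) ^ k :=
    pow_lt_pow_right_of_lt_one₀ one_div_cast_pos (one_div_cast_lt_one hM) k.lt_succ_self
  ext σ
  exact ⟨fun h => mem_ball.mpr ((dist_le_of_agree h).trans_lt hlt),
    fun h => agree_of_dist_lt (mem_ball.mp h)⟩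

lemma measurableSet_cyl (hM : 2 ≤ M) (k : ℕ) (τ : CodeTree M N) :
    MeasurableSet (cyl k τ) := by
  rw [cyl_eq_ball hM]
  exact isOpen_ball.measurableSet

lemma dist_ofPattern_toPattern_le (k : ℕ) (ω : CodeTree M N) :
    dist (ofPattern (toPattern k ω)) ω ≤ (1 / (M : ℝ)) ^ (k + 1) :=
  dist_le_of_agree fun _ hi => ofPattern_apply _ hi

instance [Fact (2 ≤ M)] : SecondCountableTopology (CodeTree M N) := by
  suffices SeparableSpace (CodeTree M N) from UniformSpace.secondCountable_of_separable _
  refine ⟨⋃ k, range (ofPattern (M := M) (N := N) (k := k)),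
    countable_iUnion fun k => (finite_range _).countable, dense_iff.mpr fun ω r hr => ?_⟩
  obtain ⟨k, hk⟩ := exists_pow_lt_of_lt_one hr (one_div_cast_lt_one (M := M) Fact.out)
  refine ⟨ofPattern (toPattern k ω), mem_ball.mpr ?_, mem_iUnion.mpr ⟨k, mem_range_self _⟩⟩
  exact (dist_ofPattern_toPattern_le k ω).trans_lt
    ((one_div_cast_pow_le_pow k.le_succ).trans_lt hk)

lemma dist_xi_le (n : Fin N) (ω κ : Fin M → CodeTree M N) :
    dist (xi n ω) (xi n κ) ≤ dist ω κ := by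
  by_cases h : xi n ω = xi n κ
  · rw [h, dist_self]
    exact dist_nonneg
  obtain ⟨i, hne, hdist⟩ := exists_dist_eq_pow h
  rw [hdist]
  cases i with
  | nil => exact absurd rfl hne
  | cons m j =>
    calc (1 / (M : ℝ)) ^ (m :: j).length ≤ (1 / (M : ℝ)) ^ j.length :=
          one_div_cast_pow_le_pow (Nat.le_succ _)
      _ ≤ dist (ω m) (κ m) := pow_le_dist hne
      _ ≤ dist ω κ := dist_le_pi_dist ω κ m

lemma lipschitzWith_eta {V : ℕ} (a : IdxA M N V) : LipschitzWith 1 (eta a) := by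
  refine LipschitzWith.of_dist_le_mul fun ω κ => ?_
  rw [NNReal.coe_one, one_mul, dist_pi_le_iff dist_nonneg]
  intro v
  refine (dist_xi_le _ _ _).trans ((dist_pi_le_iff dist_nonneg).mpr fun m => ?_)
  exact dist_le_pi_dist ω κ _

lemma measurable_eta [Fact (2 ≤ M)] {V : ℕ} (a : IdxA M N V) : Measurable (eta a) :=
  (lipschitzWith_eta a).continuous.measurable

lemma integrable_of_lipschitzWith (μ : Measure (CodeTree M N)) [IsProbabilityMeasure μ]
    {f : CodeTree M N → ℝ} (hf : LipschitzWith 1 f) : Integrable f μ := by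
  obtain ⟨ω₀⟩ := nonempty_of_isProbabilityMeasure μ
  refine Integrable.of_bound hf.continuous.aestronglyMeasurable (‖f ω₀‖ + 1)
    (Eventually.of_forall fun ω => ?_)
  have h := hf.dist_le_mul ω ω₀
  rw [NNReal.coe_one, one_mul, Real.dist_eq] at h
  simp only [Real.norm_eq_abs]
  linarith [abs_sub_abs_le_abs_sub (f ω) (f ω₀), dist_le_one ω ω₀]

variable [Fact (2 ≤ M)]

lemma measurable_toPattern (k : ℕ) :
    Measurable (toPattern k : CodeTree M N → Pattern M N k) := by
  refine measurable_to_countable' fun c => ?_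
  have : toPattern k ⁻¹' {c} = cyl k (ofPattern c) := by
    ext σ
    rw [mem_cyl_ofPattern]
    rfl
  rw [this]
  exact measurableSet_cyl Fact.out k _

lemma integral_comp_toPattern (μ : Measure (CodeTree M N)) [IsFiniteMeasure μ] (k : ℕ)
    (g : Pattern M N k → ℝ) :
    ∫ σ, g (toPattern k σ) ∂μ = ∑ c, μ.real (cyl k (ofPattern c)) * g c := by
  rw [← integral_map (measurable_toPattern k).aemeasurable
    (Integrable.of_finite (f := g)).aestronglyMeasurable,
    integral_fintype (hf := Integrable.of_finite)]
  refine Finset.sum_congr rfl fun c _ => ?_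
  rw [map_measureReal_apply (measurable_toPattern k) (measurableSet_singleton c), smul_eq_mul]
  congr 2
  ext σ
  rw [mem_cyl_ofPattern]
  rfl

lemma abs_integral_sub_sum_cyl_le (μ : Measure (CodeTree M N)) [IsProbabilityMeasure μ]
    {f : CodeTree M N → ℝ} (hf : LipschitzWith 1 f) (k : ℕ) :
    |∫ σ, f σ ∂μ - ∑ c : Pattern M N k, μ.real (cyl k (ofPattern c)) * f (ofPattern c)|
      ≤ (1 / (M : ℝ)) ^ (k + 1) := by
  have hdist (σ : CodeTree M N) :
      ‖f σ - f (ofPattern (toPattern k σ))‖ ≤ (1 / (M : ℝ)) ^ (k + 1) := by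
    rw [← dist_eq_norm, dist_comm]
    exact (hf.dist_le_mul _ _).trans (by
      rw [NNReal.coe_one, one_mul]; exact dist_ofPattern_toPattern_le k σ)
  have hint : Integrable (fun σ => f (ofPattern (toPattern k σ))) μ :=
    (Integrable.of_finite (f := fun c => f (ofPattern c))).comp_measurable
      (measurable_toPattern k)
  rw [← integral_comp_toPattern, ← integral_sub (integrable_of_lipschitzWith μ hf) hint,
    ← Real.norm_eq_abs]
  simpa using norm_integral_le_of_norm_le_const (μ := μ) (Eventually.of_forall hdist)

end CodeTree

section FiniteProduct

variable {ι α : Type*} [Fintype ι] [DecidableEq ι] [Fintype α] {q : α → ℝ}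

lemma sum_prod_eq_one (hq : ∑ a, q a = 1) : ∑ x : ι → α, ∏ i, q (x i) = 1 := by
  rw [← Fintype.prod_sum fun (_ : ι) a => q a, hq, Finset.prod_const_one]

lemma sum_prod_mul_comp_of_injective {γ : Type*} [Fintype γ] [DecidableEq γ]
    (hq : ∑ a, q a = 1) {s : γ → ι} (hs : Function.Injective s) (g : (γ → α) → ℝ) :
    ∑ x : ι → α, (∏ i, q (x i)) * g (x ∘ s)
      = ∑ c : γ → α, (∏ j, q (c j)) * g c := by
  classical
  let e := Equiv.piEquivPiSubtypeProd (· ∈ range s) (fun _ => α)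
  let σ := Equiv.ofInjective s hs
  calc ∑ x : ι → α, (∏ i, q (x i)) * g (x ∘ s)
      = ∑ y : {i // i ∈ range s} → α, ∑ z : {i // i ∉ range s} → α,
          ((∏ i, q (y i)) * g (y ∘ σ)) * ∏ i, q (z i) := by
        rw [← Fintype.sum_prod_type', ← e.symm.sum_comp]
        refine Fintype.sum_congr _ _ fun yz => ?_
        rw [← Fintype.prod_subtype_mul_prod_subtype (· ∈ range s)]
        have h₁ (i : {i // i ∈ range s}) : e.symm yz i = yz.1 i := dif_pos i.2
        have h₂ (i : {i // i ∉ range s}) : e.symm yz i = yz.2 i := dif_neg i.2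
        have hy : (e.symm yz) ∘ s = yz.1 ∘ σ := funext fun j => h₁ (σ j)
        simp only [h₁, h₂, hy]
        rw [mul_right_comm]
        congr
        exact Subsingleton.elim _ _
    _ = ∑ y : {i // i ∈ range s} → α, (∏ i, q (y i)) * g (y ∘ σ) := by
        simp_rw [← Finset.mul_sum, sum_prod_eq_one hq, mul_one]
    _ = ∑ c : γ → α, (∏ j, q (c j)) * g c := by
        rw [← (σ.arrowCongr (Equiv.refl α)).symm.sum_comp]
        refine Fintype.sum_congr _ _ fun c => ?_
        have hc : (σ.arrowCongr (Equiv.refl α)).symm c = c ∘ σ := rfl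
        rw [hc, Function.comp_def, σ.prod_comp (fun i => q (c i))]

lemma sum_prod_mul_sum_update {τ β : Type*} [Fintype τ] [DecidableEq τ] [Fintype β]
    {q : β → ℝ} (hq : ∑ b, q b = 1) (t₀ : τ) (F : (τ → β) → ℝ) :
    ∑ x : τ → β, (∏ t, q (x t)) * ∑ b, q b * F (Function.update x t₀ b)
      = ∑ x : τ → β, (∏ t, q (x t)) * F x := by
  let E := Equiv.funSplitAt t₀ β
  have hupdate (a b : β) (r : {t // t ≠ t₀} → β) :
      Function.update (E.symm (a, r)) t₀ b = E.symm (b, r) := by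
    funext t
    by_cases ht : t = t₀
    · subst ht; simp [E]
    · simp [E, ht]
  have hprod (a : β) (r : {t // t ≠ t₀} → β) :
      ∏ t, q (E.symm (a, r) t) = q a * ∏ t, q (r t) := by
    rw [Fintype.prod_eq_mul_prod_subtype_ne _ t₀]
    congr 1
    · simp [E]
    · exact Fintype.prod_congr _ _ fun t => by simp [E, t.2]
  simp only [← E.symm.sum_comp, Fintype.sum_prod_type, hupdate, hprod]
  rw [Finset.sum_comm]
  conv_rhs => rw [Finset.sum_comm]
  refine Fintype.sum_congr _ _ fun r => ?_
  calc ∑ a, (q a * ∏ t, q (r t)) * ∑ b, q b * F (E.symm (b, r))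
      = (∑ a, q a) * ∑ b, (∏ t, q (r t)) * (q b * F (E.symm (b, r))) := by
        rw [Finset.sum_mul]
        exact Fintype.sum_congr _ _ fun a => by
          simp only [Finset.mul_sum, mul_assoc]
    _ = ∑ b, (q b * ∏ t, q (r t)) * F (E.symm (b, r)) := by
        rw [hq, one_mul]
        exact Fintype.sum_congr _ _ fun b => by ring

section Uniform

variable {V : ℕ} [NeZero V]

lemma sum_uniform_eq_one : ∑ _a : Fin V, (1 / V : ℝ) = 1 := by
  rw [Finset.sum_const, Finset.card_univ, Fintype.card_fin, nsmul_eq_mul, mul_one_div_cancel]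
  exact_mod_cast NeZero.ne V

lemma sum_uniform_mul_ite_eq {κ : Type*} [Fintype κ] [DecidableEq κ] {j₁ j₂ : κ}
    (h : j₁ ≠ j₂) :
    ∑ x : κ → Fin V, (∏ _p : κ, (1 / V : ℝ)) * (if x j₁ = x j₂ then 1 else 0)
      = 1 / V := by
  have hs : Function.Injective ![j₁, j₂] := by
    intro a b hab
    fin_cases a <;> fin_cases b <;> simp_all [eq_comm]
  have := sum_prod_mul_comp_of_injective (q := fun _ : Fin V => (1 / V : ℝ)) sum_uniform_eq_one hs
    (fun c => if c 0 = c 1 then 1 else 0)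
  simp only [Function.comp_apply, Matrix.cons_val_zero, Matrix.cons_val_one] at this
  refine this.trans ?_
  rw [← (piFinTwoEquiv fun _ => Fin V).symm.sum_comp, Fintype.sum_prod_type]
  have hV : (V : ℝ) ≠ 0 := by exact_mod_cast NeZero.ne V
  simp only [piFinTwoEquiv_symm_apply, Fin.cons_zero, Fin.cons_one, mul_ite, mul_one, mul_zero,
    Finset.sum_ite_eq, Finset.mem_univ, if_true, Finset.prod_const, Finset.sum_const,
    Finset.card_univ, Fintype.card_fin, nsmul_eq_mul]
  field_simp
  norm_num

lemma sum_uniform_collision_le {τ κ : Type*} [Fintype τ] [DecidableEq τ] [Fintype κ]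
    [DecidableEq κ] (t₀ : τ) (C : (τ → κ → Fin V) → Prop) [DecidablePred C]
    (β β' : (τ → κ → Fin V) → κ)
    (hC : ∀ x h, C (Function.update x t₀ h) ↔ C x)
    (hβ : ∀ x h, β (Function.update x t₀ h) = β x)
    (hβ' : ∀ x h, β' (Function.update x t₀ h) = β' x)
    (hne : ∀ x, C x → β x ≠ β' x) :
    ∑ x : τ → κ → Fin V, (∏ _t : τ, ∏ _p : κ, (1 / V : ℝ)) *
      (if C x ∧ x t₀ (β x) = x t₀ (β' x) then 1 else 0) ≤ 1 / V := by
  have hu : ∑ _h : κ → Fin V, ∏ _p : κ, (1 / V : ℝ) = 1 :=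
    sum_prod_eq_one sum_uniform_eq_one
  rw [← sum_prod_mul_sum_update hu t₀]
  calc _ ≤ ∑ x : τ → κ → Fin V, (∏ _t : τ, ∏ _p : κ, (1 / V : ℝ)) * (1 / V) := by
        gcongr with x
        simp only [hC, hβ, hβ', Function.update_self]
        by_cases hCx : C x
        · simp only [hCx, true_and]
          exact (sum_uniform_mul_ite_eq (hne x hCx)).le
        · simp [hCx]
    _ = 1 / V := by rw [← Finset.sum_mul, sum_prod_eq_one hu, one_mul]

end Uniform

end FiniteProduct

section Dynamics

variable {M N V : ℕ}

def etaComp :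
    (s : ℕ) → (Fin s → IdxA M N V) → (Fin V → CodeTree M N) → Fin V → CodeTree M N
  | 0, _ => id
  | s + 1, e => eta (e 0) ∘ etaComp s (Fin.tail e)

variable [NeZero M] [Fact (2 ≤ M)]

lemma measure_eq_sum_etaComp {P : Fin N → NNReal} {μV : Measure (Fin V → CodeTree M N)}
    (hinv : μV = ∑ a : IdxA M N V, probA P a • μV.map (eta a)) (s : ℕ)
    {B : Set (Fin V → CodeTree M N)} (hB : MeasurableSet B) :
    μV B = ∑ e : Fin s → IdxA M N V, (∏ t, probA P (e t)) * μV (etaComp s e ⁻¹' B) := by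
  induction s generalizing B with
  | zero => simp [etaComp]
  | succ s ih =>
    have step : μV B = ∑ a, probA P a * μV (eta a ⁻¹' B) := by
      conv_lhs => rw [hinv]
      simp [Measure.map_apply (CodeTree.measurable_eta _) hB]
    rw [step, ← (Fin.consEquiv fun _ => IdxA M N V).sum_comp, Fintype.sum_prod_type]
    refine Fintype.sum_congr _ _ fun a => ?_
    rw [ih (CodeTree.measurable_eta a hB), Finset.mul_sum]
    refine Fintype.sum_congr _ _ fun e => ?_
    simp [Fin.prod_univ_succ, etaComp, mul_assoc, Set.preimage_comp, Fin.consEquiv]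

end Dynamics

section Genealogy

variable {M N V : ℕ}

/-- When generation `s` is built from generation `s + 1` by the limb labels `L s`, the tree at
address `i` of tree `v` of generation `t` is tree `buffer L t v i` of generation `t + |i|`. -/
def buffer (L : ℕ → Fin V → Fin M → Fin V) : ℕ → Fin V → List (Fin M) → Fin V
  | _, v, [] => v
  | t, v, m :: j => buffer L (t + 1) (L t v m) j

lemma buffer_append_singleton (L : ℕ → Fin V → Fin M → Fin V) (i : List (Fin M)) (m : Fin M)
    (t : ℕ) (v : Fin V) : buffer L t v (i ++ [m]) = L (t + i.length) (buffer L t v i) m := by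
  induction i generalizing t v with
  | nil => rfl
  | cons m' j ih =>
    simp only [List.cons_append, buffer, ih, List.length_cons]
    congr 1
    omega

lemma buffer_congr {L L' : ℕ → Fin V → Fin M → Fin V} (i : List (Fin M)) (t : ℕ)
    (v : Fin V) (h : ∀ s, t ≤ s → s < t + i.length → L s = L' s) :
    buffer L t v i = buffer L' t v i := by
  induction i generalizing t v with
  | nil => rfl
  | cons m j ih =>
    simp only [buffer, h t le_rfl (by simp)]
    exact ih (t + 1) _ fun s h₁ h₂ => h s (by omega) (by simp; omega)

lemma buffer_shift (L : ℕ → Fin V → Fin M → Fin V) (i : List (Fin M)) (t : ℕ)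
    (v : Fin V) :
    buffer (fun s => L (s + 1)) t v i = buffer L (t + 1) v i := by
  induction i generalizing t v with
  | nil => rfl
  | cons m j ih => exact ih (t + 1) _

/-- The node labels `n_v` of `k + 1` consecutive maps `η^a`, indexed by (time, tree). -/
abbrev Labels (N V k : ℕ) := Fin (k + 1) × Fin V → Fin N

/-- The limb labels `v_{v,m}` of `k + 1` consecutive maps `η^a`, indexed by time, then
(tree, limb). -/
abbrev Limbs (M V k : ℕ) := Fin (k + 1) → Fin V × Fin M → Fin V

namespace Limbs

variable {k : ℕ}

/-- Only times `≤ k` are ever used; clamping just avoids a junk value beyond them. -/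
def toSeq (L : Limbs M V k) : ℕ → Fin V → Fin M → Fin V :=
  fun t v m => L (Fin.clamp t k) (v, m)

variable [NeZero V]

def buf (L : Limbs M V k) (i : List (Fin M)) : Fin V := buffer L.toSeq 0 0 i

lemma buf_append_singleton (L : Limbs M V k) (i : List (Fin M)) (m : Fin M) (t : Fin (k + 1))
    (ht : (t : ℕ) = i.length) : L.buf (i ++ [m]) = L t (L.buf i, m) := by
  have hclamp : Fin.clamp i.length k = t := Fin.ext (by simp [← ht, Nat.le_of_lt_succ t.isLt])
  rw [buf, buffer_append_singleton, zero_add, toSeq, hclamp]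
  rfl

lemma buf_congr {L L' : Limbs M V k} (i : List (Fin M))
    (h : ∀ t : Fin (k + 1), (t : ℕ) < i.length → L t = L' t) : L.buf i = L'.buf i := by
  refine buffer_congr i 0 0 fun s _ hs => ?_
  funext v m
  simp only [toSeq]
  rw [h _ (by simp only [Fin.coe_clamp]; omega)]

end Limbs

def splitIdx {k : ℕ} : (Fin (k + 1) → IdxA M N V) ≃ Labels N V k × Limbs M V k where
  toFun e := (fun tv => (e tv.1 tv.2).1, fun t p => (e t p.1).2 p.2)
  invFun nL t v := (nL.1 (t, v), fun m => nL.2 t (v, m))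
  left_inv _ := rfl
  right_inv _ := rfl

lemma etaComp_apply (k : ℕ) (e : Fin (k + 1) → IdxA M N V) (ω : Fin V → CodeTree M N)
    (v : Fin V) (i : List (Fin M)) (hi : i.length ≤ k) :
    etaComp (k + 1) e ω v i
      = (splitIdx e).1
          (⟨i.length, Nat.lt_succ_of_le hi⟩, buffer (splitIdx e).2.toSeq 0 v i) := by
  induction k generalizing v i with
  | zero =>
    cases i with
    | nil => rfl
    | cons m j => simp at hi
  | succ k ih =>
    cases i with
    | nil => rfl
    | cons m j =>
      have hshift : (splitIdx (Fin.tail e)).2.toSeq = fun s => (splitIdx e).2.toSeq (s + 1) := by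
        have hclamp (s : ℕ) : (Fin.clamp s k).succ = Fin.clamp (s + 1) (k + 1) :=
          Fin.ext (by simp only [Fin.val_succ, Fin.coe_clamp]; omega)
        funext s w m'
        show (e (Fin.clamp s k).succ w).2 m' = (e (Fin.clamp (s + 1) (k + 1)) w).2 m'
        rw [hclamp]
      show etaComp (k + 1) (Fin.tail e) ω ((e 0 v).2 m) j = _
      rw [ih (Fin.tail e) _ j (by simpa using hi), hshift, buffer_shift]
      rfl

variable [NeZero V]

/-- The level-`k` pattern of tree `0` of the composite of the maps described by `n` and `L`. -/
def pattern {k : ℕ} (n : Labels N V k) (L : Limbs M V k) : Pattern M N k :=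
  fun i => n (⟨i.1.length, Nat.lt_succ_of_le i.2⟩, L.buf i.1)

lemma toPattern_etaComp {k : ℕ} (e : Fin (k + 1) → IdxA M N V) (ω : Fin V → CodeTree M N) :
    CodeTree.toPattern k (etaComp (k + 1) e ω 0) = pattern (splitIdx e).1 (splitIdx e).2 :=
  funext fun i => etaComp_apply k e ω 0 i.1 i.2

end Genealogy

section CylinderLaws

open CodeTree

variable {M N V : ℕ}

lemma prod_probA_toReal (P : Fin N → NNReal) {k : ℕ} (e : Fin (k + 1) → IdxA M N V) :
    (∏ t, probA P (e t)).toReal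
      = (∏ tv, (P ((splitIdx e).1 tv) : ℝ))
          * ∏ _t : Fin (k + 1), ∏ _p : Fin V × Fin M, (1 / V : ℝ) := by
  simp only [probA, ENNReal.toReal_prod, ENNReal.toReal_div, ENNReal.toReal_pow,
    ENNReal.toReal_natCast, ENNReal.coe_toReal, Fintype.prod_prod_type, ← Finset.prod_mul_distrib]
  refine Fintype.prod_congr _ _ fun t => ?_
  rw [div_eq_mul_inv, Finset.prod_mul_distrib]
  simp [splitIdx, Finset.prod_const, Finset.card_univ, ← inv_pow, ← pow_mul, mul_comm M V]

variable [NeZero V]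

lemma probA_ne_top (P : Fin N → NNReal) (a : IdxA M N V) : probA P a ≠ ⊤ :=
  ENNReal.div_ne_top (ENNReal.prod_ne_top fun _ _ => ENNReal.coe_ne_top)
    (pow_ne_zero _ (Nat.cast_ne_zero.mpr (NeZero.ne V)))

variable [NeZero M] [Fact (2 ≤ M)]

lemma sum_measureReal_cyl_mul {P : Fin N → NNReal} {μV : Measure (Fin V → CodeTree M N)}
    [IsProbabilityMeasure μV] (hinv : μV = ∑ a : IdxA M N V, probA P a • μV.map (eta a))
    (k : ℕ) (g : Pattern M N k → ℝ) :
    ∑ c, (μV.map (· 0)).real (cyl k (ofPattern c)) * g c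
      = ∑ nL : Labels N V k × Limbs M V k, (∏ tv, (P (nL.1 tv) : ℝ))
          * (∏ _t : Fin (k + 1), ∏ _p : Fin V × Fin M, (1 / V : ℝ))
          * g (pattern nL.1 nL.2) := by
  classical
  have hcyl (c : Pattern M N k) : (μV.map (· 0)).real (cyl k (ofPattern c))
      = ∑ e : Fin (k + 1) → IdxA M N V,
          (∏ t, probA P (e t)).toReal
            * if pattern (splitIdx e).1 (splitIdx e).2 = c then 1 else 0 := by
    have hB := measurableSet_cyl (N := N) Fact.out k (ofPattern c)
    rw [measureReal_def, Measure.map_apply (measurable_pi_apply 0) hB,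
      measure_eq_sum_etaComp hinv (k + 1) (measurable_pi_apply 0 hB),
      ENNReal.toReal_sum fun e _ => ENNReal.mul_ne_top
        (ENNReal.prod_ne_top fun t _ => probA_ne_top P (e t)) (measure_ne_top _ _)]
    refine Fintype.sum_congr _ _ fun e => ?_
    have hpre : etaComp (k + 1) e ⁻¹' ((· 0) ⁻¹' cyl k (ofPattern c))
        = {_ω | pattern (splitIdx e).1 (splitIdx e).2 = c} := by
      ext ω
      simp only [mem_preimage, mem_cyl_ofPattern, toPattern_etaComp, mem_ofPred_eq]
    rw [hpre, ENNReal.toReal_mul]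
    split_ifs with h <;> simp [h]
  simp only [hcyl, Finset.sum_mul, mul_assoc, ite_mul, one_mul, zero_mul]
  rw [Finset.sum_comm, ← splitIdx.symm.sum_comp]
  refine Fintype.sum_congr _ _ fun nL => ?_
  simp only [mul_ite, mul_zero, Finset.sum_ite_eq, Finset.mem_univ, if_true, prod_probA_toReal,
    Equiv.apply_symm_apply, mul_assoc]

end CylinderLaws

section IidLaw

variable {M N : ℕ}

def Node.equivOption (k : ℕ) : Node M (k + 1) ≃ Option (Fin M × Node M k) where
  toFun
    | ⟨[], _⟩ => none
    | ⟨m :: j, h⟩ => some (m, ⟨j, Nat.le_of_succ_le_succ h⟩)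
  invFun
    | none => ⟨[], Nat.zero_le _⟩
    | some (m, j) => ⟨m :: j.1, Nat.succ_le_succ j.2⟩
  left_inv := by rintro ⟨_ | ⟨m, j⟩, h⟩ <;> rfl
  right_inv := by rintro (_ | ⟨m, j, h⟩) <;> rfl

lemma cylProb_toReal (P : Fin N → NNReal) (k : ℕ) (τ : CodeTree M N) :
    (cylProb P k τ).toReal = ∏ i : Node M k, (P (τ i.1) : ℝ) := by
  induction k generalizing τ with
  | zero =>
    have : Subsingleton (Node M 0) :=
      ⟨fun i j => Subtype.ext (by rw [List.length_eq_zero_iff.mp (Nat.le_zero.mp i.2),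
        List.length_eq_zero_iff.mp (Nat.le_zero.mp j.2)])⟩
    rw [Fintype.prod_subsingleton _ ⟨[], le_rfl⟩]
    rfl
  | succ k ih =>
    rw [← (Node.equivOption k).symm.prod_comp, Fintype.prod_option, Fintype.prod_prod_type]
    simp only [cylProb, ENNReal.toReal_mul, ENNReal.toReal_prod, ENNReal.coe_toReal]
    congr 1
    exact Fintype.prod_congr _ _ fun m => ih fun j => τ (m :: j)

lemma measureReal_cyl_ofPattern [NeZero M] {k : ℕ} {P : Fin N → NNReal}
    {ρ : Measure (CodeTree M N)}
    (hρcyl : ∀ (τ : CodeTree M N) (k : ℕ),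
      ρ {σ : CodeTree M N | ∀ i : List (Fin M), i.length ≤ k → σ i = τ i}
        = cylProb P k τ)
    (c : Pattern M N k) :
    ρ.real (CodeTree.cyl k (CodeTree.ofPattern c)) = ∏ i, (P (c i) : ℝ) := by
  rw [measureReal_def, CodeTree.cyl, hρcyl, cylProb_toReal]
  exact Fintype.prod_congr _ _ fun i => by rw [CodeTree.ofPattern_apply c i.2]

end IidLaw

section Coupling

open CodeTree

variable {M N V k : ℕ} [NeZero V]

namespace Limbs

/-- Two distinct nodes of level `l` of tree `0` descend from the same tree of generation `l`. -/
def Collides (L : Limbs M V k) (l : ℕ) : Prop :=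
  ∃ p q : List (Fin M), p.length = l ∧ q.length = l ∧ p ≠ q ∧ L.buf p = L.buf q

def FirstCollision (L : Limbs M V k) (l : ℕ) : Prop :=
  L.Collides l ∧ ∀ l' < l, ¬ L.Collides l'

lemma not_collides_zero (L : Limbs M V k) : ¬ L.Collides 0 := by
  rintro ⟨p, q, hp, hq, hpq, -⟩
  exact hpq (by rw [List.length_eq_zero_iff.mp hp, List.length_eq_zero_iff.mp hq])

lemma collides_congr {L L' : Limbs M V k} (l : ℕ)
    (h : ∀ t : Fin (k + 1), (t : ℕ) < l → L t = L' t) :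
    L.Collides l ↔ L'.Collides l := by
  have hbuf (p : List (Fin M)) (hp : p.length = l) : L.buf p = L'.buf p :=
    buf_congr p fun t ht => h t (hp ▸ ht)
  constructor <;> rintro ⟨p, q, hp, hq, hpq, h⟩ <;> refine ⟨p, q, hp, hq, hpq, ?_⟩
  · rwa [← hbuf p hp, ← hbuf q hq]
  · rwa [hbuf p hp, hbuf q hq]

end Limbs

open Classical in
/-- On a level without collision the nodes descend from distinct trees, so their labels are
already independent. -/
noncomputable def coupledPattern (n : Labels N V k) (L : Limbs M V k) (f : Pattern M N k) :
    Pattern M N k :=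
  fun i => if L.Collides i.1.length then f i else pattern n L i

lemma sum_coupledPattern {P : Fin N → NNReal} (hP : ∑ y, (P y : ℝ) = 1) (L : Limbs M V k)
    (g : Pattern M N k → ℝ) :
    ∑ n : Labels N V k, ∑ f : Pattern M N k,
        (∏ tv, (P (n tv) : ℝ)) * (∏ i, (P (f i) : ℝ)) * g (coupledPattern n L f)
      = ∑ c : Pattern M N k, (∏ i, (P (c i) : ℝ)) * g c := by
  classical
  let s : Node M k → (Fin (k + 1) × Fin V) ⊕ Node M k := fun i =>
    if L.Collides i.1.length then .inr i
    else .inl (⟨i.1.length, Nat.lt_succ_of_le i.2⟩, L.buf i.1)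
  have hs : Function.Injective s := by
    intro i i' h
    by_cases h₁ : L.Collides i.1.length <;> by_cases h₂ : L.Collides i'.1.length <;>
      simp only [s, h₁, h₂, if_true, if_false, reduceCtorEq, Sum.inr.injEq, Sum.inl.injEq,
        Prod.mk.injEq, Fin.mk.injEq] at h
    · exact h
    · obtain ⟨hlen, hbuf⟩ := h
      by_contra hne
      exact h₁ ⟨i.1, i'.1, rfl, hlen.symm, fun e => hne (Subtype.ext e), hbuf⟩
  rw [← sum_prod_mul_comp_of_injective hP hs g,
    ← (Equiv.sumArrowEquivProdArrow _ _ _).symm.sum_comp, Fintype.sum_prod_type]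
  refine Fintype.sum_congr _ _ fun n => Fintype.sum_congr _ _ fun f => ?_
  rw [Fintype.prod_sum_type]
  congr 2
  funext i
  simp only [coupledPattern, s, Function.comp_apply]
  split_ifs <;> rfl

open Classical in
lemma sum_firstCollision_le {l : ℕ} (hl₁ : 1 ≤ l) (hl : l ≤ k + 1) :
    ∑ L : Limbs M V k, (∏ _t : Fin (k + 1), ∏ _p : Fin V × Fin M, (1 / V : ℝ))
        * (if L.FirstCollision l then 1 else 0) ≤ (M : ℝ) ^ (2 * l) / V := by
  let t₀ : Fin (k + 1) := ⟨l - 1, by omega⟩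
  -- `pq` encodes the two nodes `p ++ [a]`, `q ++ [b]` of level `l`
  let Event (pq : (List.Vector (Fin M) (l - 1) × Fin M) × (List.Vector (Fin M) (l - 1) × Fin M))
      (L : Limbs M V k) : Prop :=
    pq.1 ≠ pq.2 ∧ ¬ L.Collides (l - 1)
      ∧ L t₀ (L.buf pq.1.1.1, pq.1.2) = L t₀ (L.buf pq.2.1.1, pq.2.2)
  have hunion (L : Limbs M V k) :
      (if L.FirstCollision l then 1 else 0 : ℝ) ≤ ∑ pq, if Event pq L then 1 else 0 := by
    split_ifs with hFC
    swap
    · exact Finset.sum_nonneg fun _ _ => by positivity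
    obtain ⟨⟨p, q, hp, hq, hpq, hbuf⟩, hbefore⟩ := hFC
    have hp₀ : p ≠ [] := fun h => by simp [h] at hp; omega
    have hq₀ : q ≠ [] := fun h => by simp [h] at hq; omega
    have hsplit {r : List (Fin M)} (hr₀ : r ≠ []) (hr : r.length = l) :
        L.buf r = L t₀ (L.buf r.dropLast, r.getLast hr₀) := by
      conv_lhs => rw [← List.dropLast_append_getLast hr₀]
      exact L.buf_append_singleton _ _ t₀ (by simp [t₀, hr])
    let pq : (List.Vector (Fin M) (l - 1) × Fin M) × (List.Vector (Fin M) (l - 1) × Fin M) :=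
      ((⟨p.dropLast, by simp [hp]⟩, p.getLast hp₀),
        (⟨q.dropLast, by simp [hq]⟩, q.getLast hq₀))
    have hEvent : Event pq L := by
      refine ⟨fun h => hpq ?_, hbefore _ (by omega), ?_⟩
      · rw [← List.dropLast_append_getLast hp₀, ← List.dropLast_append_getLast hq₀]
        have h₁ : p.dropLast = q.dropLast := congrArg (fun x => x.1.1) h
        have h₂ : p.getLast hp₀ = q.getLast hq₀ := congrArg (fun x => x.2) h
        rw [h₁, h₂]
      · rw [← hsplit hp₀ hp, ← hsplit hq₀ hq, hbuf]
    calc (1 : ℝ) = if Event pq L then 1 else 0 := (if_pos hEvent).symm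
      _ ≤ ∑ pq, if Event pq L then 1 else 0 :=
        Finset.single_le_sum (f := fun pq => if Event pq L then (1 : ℝ) else 0)
          (fun _ _ => by positivity) (Finset.mem_univ pq)
  have hpair (pq) :
      ∑ L : Limbs M V k, (∏ _t : Fin (k + 1), ∏ _p : Fin V × Fin M, (1 / V : ℝ))
        * (if Event pq L then 1 else 0) ≤ 1 / V := by
    by_cases hne : pq.1 = pq.2
    · simp [Event, hne]
    have hupdate (L : Limbs M V k) (h) (r : List (Fin M)) (hr : r.length = l - 1) :
        Limbs.buf (Function.update L t₀ h) r = L.buf r :=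
      Limbs.buf_congr r fun t ht =>
        Function.update_of_ne (Fin.ne_of_lt (show (t : ℕ) < l - 1 by omega)) _ _
    refine (le_of_eq (Fintype.sum_congr _ _ fun L => ?_)).trans
      (sum_uniform_collision_le t₀ (fun L : Limbs M V k => ¬ L.Collides (l - 1))
        (fun L : Limbs M V k => (L.buf pq.1.1.1, pq.1.2))
        (fun L : Limbs M V k => (L.buf pq.2.1.1, pq.2.2)) ?_ ?_ ?_ ?_)
    · simp only [Event, hne, not_false_eq_true, true_and, ne_eq]
    · intro L h
      exact not_congr (Limbs.collides_congr _ fun t ht =>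
        Function.update_of_ne (Fin.ne_of_lt (show (t : ℕ) < l - 1 by omega)) _ _)
    · intro L h
      rw [hupdate L h _ pq.1.1.2]
    · intro L h
      rw [hupdate L h _ pq.2.1.2]
    · intro L hL h
      rw [Prod.mk.injEq] at h
      by_cases hlist : pq.1.1.1 = pq.2.1.1
      · exact hne (Prod.ext (Subtype.ext hlist) h.2)
      · exact hL ⟨_, _, pq.1.1.2, pq.2.1.2, hlist, h.1⟩
  calc ∑ L : Limbs M V k, (∏ _t : Fin (k + 1), ∏ _p : Fin V × Fin M, (1 / V : ℝ))
        * (if L.FirstCollision l then 1 else 0)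
      ≤ ∑ L : Limbs M V k, ∑ pq,
          (∏ _t : Fin (k + 1), ∏ _p : Fin V × Fin M, (1 / V : ℝ))
            * (if Event pq L then 1 else 0) := by
        gcongr with L
        rw [← Finset.mul_sum]
        gcongr
        exact hunion L
    _ ≤ ∑ _pq : (List.Vector (Fin M) (l - 1) × Fin M)
            × (List.Vector (Fin M) (l - 1) × Fin M), (1 / V : ℝ) := by
        rw [Finset.sum_comm]
        exact Finset.sum_le_sum fun pq _ => hpair pq
    _ = (M : ℝ) ^ (2 * l) / V := by
        rw [Finset.sum_const, Finset.card_univ, nsmul_eq_mul]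
        simp only [Fintype.card_prod, card_vector, Fintype.card_fin, ← pow_succ,
          Nat.sub_add_cancel hl₁]
        push_cast
        ring

variable [NeZero M]

lemma dist_ofPattern_le {c c' : Pattern M N k} {l : ℕ}
    (h : ∀ i : Node M k, i.1.length ≤ l → c i = c' i) :
    dist (ofPattern c) (ofPattern c') ≤ (1 / (M : ℝ)) ^ (l + 1) :=
  dist_le_of_agree fun i hi => h _ (by rw [List.length_take]; omega)

open Classical in
lemma dist_pattern_coupledPattern_le (n : Labels N V k) (L : Limbs M V k) (f : Pattern M N k)
    (j : ℕ) :
    dist (ofPattern (pattern n L)) (ofPattern (coupledPattern n L f))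
      ≤ (1 / (M : ℝ)) ^ (j + 1)
        + ∑ l ∈ Finset.Icc 1 j, (1 / (M : ℝ)) ^ l * if L.FirstCollision l then 1 else 0 := by
  have hagree {l : ℕ} (hl : ∀ l' ≤ l, ¬ L.Collides l') (i : Node M k)
      (hi : i.1.length ≤ l) :
      pattern n L i = coupledPattern n L f i := by
    simp [coupledPattern, hl _ hi]
  have hsum :
      0 ≤ ∑ l ∈ Finset.Icc 1 j, (1 / (M : ℝ)) ^ l * if L.FirstCollision l then 1 else 0 :=
    Finset.sum_nonneg fun l _ => by positivity
  by_cases hcoll : ∃ l ≤ j, L.Collides l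
  · let l₀ := Nat.find hcoll
    obtain ⟨hl₀j, hl₀⟩ : l₀ ≤ j ∧ L.Collides l₀ := Nat.find_spec hcoll
    have hbefore : ∀ l < l₀, ¬ L.Collides l :=
      fun l hl hL => Nat.find_min hcoll hl ⟨by omega, hL⟩
    have hl₀pos : 1 ≤ l₀ :=
      Nat.one_le_iff_ne_zero.mpr fun h => L.not_collides_zero (h ▸ hl₀)
    calc dist (ofPattern (pattern n L)) (ofPattern (coupledPattern n L f))
        ≤ (1 / (M : ℝ)) ^ (l₀ - 1 + 1) :=
          dist_ofPattern_le (hagree fun l hl => hbefore l (by omega))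
      _ = (1 / (M : ℝ)) ^ l₀ * if L.FirstCollision l₀ then 1 else 0 := by
          rw [if_pos ⟨hl₀, hbefore⟩, mul_one, Nat.sub_add_cancel hl₀pos]
      _ ≤ ∑ l ∈ Finset.Icc 1 j, (1 / (M : ℝ)) ^ l * if L.FirstCollision l then 1 else 0 :=
          Finset.single_le_sum
            (f := fun l => (1 / (M : ℝ)) ^ l * if L.FirstCollision l then 1 else 0)
            (fun l _ => by positivity) (Finset.mem_Icc.mpr ⟨hl₀pos, hl₀j⟩)
      _ ≤ _ := le_add_of_nonneg_left (by positivity)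
  · push Not at hcoll
    exact (dist_ofPattern_le (hagree hcoll)).trans (le_add_of_nonneg_right hsum)

open Classical in
lemma sum_pattern_sub_sum_iid_le {P : Fin N → NNReal} (hP : ∑ y, (P y : ℝ) = 1)
    {g : CodeTree M N → ℝ} (hg : LipschitzWith 1 g) {j : ℕ} (hj : j ≤ k) :
    ∑ nL : Labels N V k × Limbs M V k, (∏ tv, (P (nL.1 tv) : ℝ))
        * (∏ _t : Fin (k + 1), ∏ _p : Fin V × Fin M, (1 / V : ℝ))
        * g (ofPattern (pattern nL.1 nL.2))
      - ∑ c : Pattern M N k, (∏ i, (P (c i) : ℝ)) * g (ofPattern c)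
      ≤ (1 / (M : ℝ)) ^ (j + 1) + ∑ l ∈ Finset.Icc 1 j, (M : ℝ) ^ l / V := by
  set w := ∏ _t : Fin (k + 1), ∏ _p : Fin V × Fin M, (1 / V : ℝ)
  set wN := fun n : Labels N V k => ∏ tv, (P (n tv) : ℝ)
  set wF := fun f : Pattern M N k => ∏ i, (P (f i) : ℝ)
  have hw : ∑ _L : Limbs M V k, w = 1 := sum_prod_eq_one (sum_prod_eq_one sum_uniform_eq_one)
  have hN : ∑ n, wN n = 1 := sum_prod_eq_one hP
  have hF : ∑ f, wF f = 1 := sum_prod_eq_one hP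
  let D (L : Limbs M V k) : ℝ := (1 / (M : ℝ)) ^ (j + 1)
    + ∑ l ∈ Finset.Icc 1 j, (1 / (M : ℝ)) ^ l * if L.FirstCollision l then 1 else 0
  have hA : ∑ nL : Labels N V k × Limbs M V k, wN nL.1 * w * g (ofPattern (pattern nL.1 nL.2))
      = ∑ L, w * ∑ n, ∑ f, wN n * wF f * g (ofPattern (pattern n L)) := by
    rw [Fintype.sum_prod_type, Finset.sum_comm]
    refine Fintype.sum_congr _ _ fun L => ?_
    simp only [Finset.mul_sum]
    refine Fintype.sum_congr _ _ fun n => ?_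
    simp only [← Finset.mul_sum, ← Finset.sum_mul, hF]
    ring
  have hB : ∑ c : Pattern M N k, wF c * g (ofPattern c)
      = ∑ L, w * ∑ n, ∑ f, wN n * wF f * g (ofPattern (coupledPattern n L f)) := by
    have hL (L : Limbs M V k) := sum_coupledPattern hP L (fun c => g (ofPattern c))
    simp only [wN, wF, hL, ← Finset.sum_mul, hw, one_mul]
  have hD (L : Limbs M V k) (n : Labels N V k) (f : Pattern M N k) :
      g (ofPattern (pattern n L)) - g (ofPattern (coupledPattern n L f)) ≤ D L :=
    (le_abs_self _).trans ((hg.dist_le_mul _ _).trans (by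
      rw [NNReal.coe_one, one_mul]; exact dist_pattern_coupledPattern_le n L f j))
  calc _ = ∑ L, w * ∑ n, ∑ f, wN n * wF f
          * (g (ofPattern (pattern n L)) - g (ofPattern (coupledPattern n L f))) := by
        rw [hA, hB, ← Finset.sum_sub_distrib]
        simp only [← mul_sub, ← Finset.sum_sub_distrib]
    _ ≤ ∑ L, w * ∑ n, ∑ f, wN n * wF f * D L := by
        refine Finset.sum_le_sum fun L _ => mul_le_mul_of_nonneg_left ?_ (by positivity)
        refine Finset.sum_le_sum fun n _ => Finset.sum_le_sum fun f _ => ?_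
        exact mul_le_mul_of_nonneg_left (hD L n f) (by positivity)
    _ = (1 / (M : ℝ)) ^ (j + 1) + ∑ l ∈ Finset.Icc 1 j, (1 / (M : ℝ)) ^ l
          * ∑ L : Limbs M V k, w * if L.FirstCollision l then 1 else 0 := by
        simp only [← Finset.sum_mul, hN, hF, one_mul, D, mul_add, Finset.sum_add_distrib,
          ← Finset.mul_sum, hw, mul_one]
        rw [Finset.sum_comm, Finset.mul_sum]
        refine congrArg _ (Finset.sum_congr rfl fun l _ => ?_)
        rw [← Finset.mul_sum]
        ring
    _ ≤ (1 / (M : ℝ)) ^ (j + 1)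
          + ∑ l ∈ Finset.Icc 1 j, (1 / (M : ℝ)) ^ l * ((M : ℝ) ^ (2 * l) / V) := by
        gcongr with l hl
        rw [Finset.mem_Icc] at hl
        exact sum_firstCollision_le (M := M) (k := k) hl.1 (by omega)
    _ = (1 / (M : ℝ)) ^ (j + 1) + ∑ l ∈ Finset.Icc 1 j, (M : ℝ) ^ l / V := by
        congr 1
        refine Finset.sum_congr rfl fun l _ => ?_
        have hM : (M : ℝ) ≠ 0 := by exact_mod_cast NeZero.ne M
        rw [pow_mul', sq, one_div_pow]
        field_simp

end Coupling

section Arithmetic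

variable {M : ℕ}

lemma sum_Icc_pow_le (hM : 2 ≤ M) (j : ℕ) :
    ∑ l ∈ Finset.Icc 1 j, (M : ℝ) ^ l ≤ 2 * (M : ℝ) ^ j := by
  have hM' : (2 : ℝ) ≤ M := by exact_mod_cast hM
  induction j with
  | zero => simp
  | succ j ih =>
    rw [Finset.sum_Icc_succ_top (by omega), pow_succ]
    nlinarith [pow_nonneg (zero_le_two.trans hM') j]

/-- The level `j` balances the truncation error `M^{-(j+1)}` against the collision term
`≈ M^j / V`. -/
lemma exists_level_error_le (hM : 2 ≤ M) {V : ℕ} (hV : 0 < V) :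
    ∃ j, (1 / (M : ℝ)) ^ (j + 1) + ∑ l ∈ Finset.Icc 1 j, (M : ℝ) ^ l / V
      ≤ 2 * ((M : ℝ) / V) ^ ((1 : ℝ) / 4) := by
  have hM' : (2 : ℝ) ≤ M := by exact_mod_cast hM
  have hV' : (0 : ℝ) < V := by exact_mod_cast hV
  set u := ((M : ℝ) / V) ^ ((1 : ℝ) / 4)
  have hu : 0 < u := by positivity
  have hu4 : V * u ^ 4 = M := by
    rw [← Real.rpow_natCast, ← Real.rpow_mul (by positivity)]
    norm_num
    field_simp
  have hM1 : 1 / (M : ℝ) < 1 := by rw [div_lt_one (by positivity)]; linarith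
  have hex : ∃ j, (1 / (M : ℝ)) ^ (j + 1) ≤ u := by
    obtain ⟨j, hj⟩ := exists_pow_lt_of_lt_one hu hM1
    exact ⟨j, (pow_le_pow_of_le_one (by positivity) hM1.le j.le_succ).trans hj.le⟩
  refine ⟨Nat.find hex, ?_⟩
  set j := Nat.find hex
  suffices ∑ l ∈ Finset.Icc 1 j, (M : ℝ) ^ l / V ≤ u by linarith [Nat.find_spec hex]
  rcases Nat.eq_zero_or_pos j with hj | hj
  · simp [hj, hu.le]
  have hmin : u < (1 / (M : ℝ)) ^ j := by
    have := Nat.find_min hex (Nat.sub_lt hj one_pos)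
    rwa [Nat.sub_add_cancel (show 1 ≤ Nat.find hex from hj), not_le] at this
  have huM : u * (M : ℝ) ^ j < 1 := by
    rwa [one_div_pow, lt_div_iff₀ (by positivity)] at hmin
  have huM' : u * M < 1 := by
    have := hmin.trans_le (pow_le_pow_of_le_one (by positivity) hM1.le hj)
    rwa [pow_one, lt_div_iff₀ (by positivity)] at this
  rw [← Finset.sum_div, div_le_iff₀ hV']
  refine (sum_Icc_pow_le hM j).trans (le_of_mul_le_mul_right ?_ (pow_pos hu 3))
  have hu2 : 2 * u ^ 2 ≤ M := by
    have : (u * M) ^ 2 < 1 := by nlinarith [mul_pos hu (zero_lt_two.trans_le hM')]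
    nlinarith [mul_pos hu hu]
  calc 2 * (M : ℝ) ^ j * u ^ 3 = 2 * (u * M ^ j) * u ^ 2 := by ring
    _ ≤ 2 * 1 * u ^ 2 := by gcongr
    _ ≤ M := by linarith
    _ = u * V * u ^ 3 := by rw [← hu4]; ring

end Arithmetic

theorem stmt_14_general {M N V : ℕ} [NeZero M] [NeZero V] (hM : 2 ≤ M)
    (P : Fin N → NNReal) (hP : ∑ n, P n = 1)
    (μV : Measure (Fin V → CodeTree M N)) (hμV : IsProbabilityMeasure μV)
    (hμVinv : μV = ∑ a : IdxA M N V, probA P a • μV.map (eta a))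
    (ρV : Measure (CodeTree M N)) (hρV : ρV = μV.map (fun ω => ω 0))
    (ρ : Measure (CodeTree M N)) (hρ : IsProbabilityMeasure ρ)
    (hρcyl : ∀ (τ : CodeTree M N) (k : ℕ),
      ρ {σ : CodeTree M N | ∀ i : List (Fin M), i.length ≤ k → σ i = τ i} = cylProb P k τ) :
    MKdist ρV ρ ≤ 2 * ((M : ℝ) / (V : ℝ)) ^ ((1 : ℝ) / 4) := by
  have : Fact (2 ≤ M) := ⟨hM⟩
  subst hρV
  have :=
    Measure.isProbabilityMeasure_map (μ := μV) (measurable_pi_apply (0 : Fin V)).aemeasurable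
  have hP' : ∑ n, (P n : ℝ) = 1 := by exact_mod_cast congrArg NNReal.toReal hP
  obtain ⟨j, hj⟩ := exists_level_error_le hM (Nat.pos_of_ne_zero (NeZero.ne V))
  refine Real.iSup_le (fun ⟨f, hf⟩ => hj.trans' ?_) (by positivity)
  set B := (1 / (M : ℝ)) ^ (j + 1) + ∑ l ∈ Finset.Icc 1 j, (M : ℝ) ^ l / V
  have hk (k : ℕ) (hjk : j ≤ k) :
      ∫ σ, f σ ∂μV.map (· 0) - ∫ σ, f σ ∂ρ
        ≤ 2 * (1 / (M : ℝ)) ^ (k + 1) + B := by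
    have hV := abs_le.mp (CodeTree.abs_integral_sub_sum_cyl_le (μV.map (· 0)) hf k)
    have hI := abs_le.mp (CodeTree.abs_integral_sub_sum_cyl_le ρ hf k)
    rw [sum_measureReal_cyl_mul hμVinv k fun c => f (CodeTree.ofPattern c)] at hV
    simp only [measureReal_cyl_ofPattern hρcyl] at hI
    linarith [sum_pattern_sub_sum_iid_le (V := V) hP' hf hjk]
  have hlim : Tendsto (fun k => 2 * (1 / (M : ℝ)) ^ (k + 1) + B) atTop (nhds (2 * 0 + B)) :=
    (((tendsto_pow_atTop_nhds_zero_of_lt_one (by positivity) (CodeTree.one_div_cast_lt_one hM)).comp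
      (tendsto_add_atTop_nat 1)).const_mul 2).add_const B
  simpa using ge_of_tendsto hlim (eventually_atTop.mpr ⟨j, hk⟩)

/-- **`ρ_V` converges to `ρ`.** Let `μ_V` be the invariant measure of the IFS
`{Ω^V; η^a, P^a, a ∈ A}` and `ρ_V` its first marginal, and let `ρ` be the i.i.d. measure
on code trees.  If `M ≥ 2` then the Monge–Kantorovich distance satisfies
`d_P(ρ_V, ρ) ≤ 2 (M/V)^{1/4}`. -/
theorem stmt_14 {M N V : ℕ} [NeZero M] [NeZero V] (hM : 2 ≤ M) (hN : 0 < N)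
    (P : Fin N → NNReal) (hP : ∑ n, P n = 1)
    (μV : Measure (Fin V → CodeTree M N)) (hμV : IsProbabilityMeasure μV)
    (hμVinv : μV = ∑ a : IdxA M N V, probA P a • μV.map (eta a))
    (ρV : Measure (CodeTree M N)) (hρV : ρV = μV.map (fun ω => ω 0))
    (ρ : Measure (CodeTree M N)) (hρ : IsProbabilityMeasure ρ)
    (hρcyl : ∀ (τ : CodeTree M N) (k : ℕ),
      ρ {σ : CodeTree M N | ∀ i : List (Fin M), i.length ≤ k → σ i = τ i} = cylProb P k τ) :
    MKdist ρV ρ ≤ 2 * ((M : ℝ) / (V : ℝ)) ^ ((1 : ℝ) / 4) :=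
  stmt_14_general hM P hP μV hμV hμVinv ρV hρV ρ hρ hρcyl
end

section
/- Let F^1, ..., F^N be IFSs with probabilities on a compact metric space (X, d), all with common Lipschitz constant 0 ≤ l < 1, and fix a positive integer V. Let F : Ω → H(X) be the code-tree coding map, extended componentwise to F : Ω^V → H(X)^V. Then for every a ∈ A and every ω ∈ Ω^V, F(η^a(ω)) = f^a(F(ω)). Moreover F(Ω_V) = H_V, where H_V is the set attractor of the IFS {H(X)^V; f^a, a ∈ A}, and F(Ω_{V,1}) = H_{V,1}, where H_{V,1} (resp. Ω_{V,1}) is the set of first components of elements of H_V (resp. Ω_V). -/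
open Metric MeasureTheory Filter Set TopologicalSpace
/-- The composition `f^{σ(∅)}_{i₁} ∘ f^{σ(i₁)}_{i₂} ∘ ⋯ ∘ f^{σ(i₁…i_{k-1})}_{i_k}`
along the branch `i = i₁i₂…i_k` of the construction tree of `σ`. -/
def treeComp {X : Type*} {M N : ℕ} (f : Fin N → Fin M → X → X) :
    List (Fin M) → CodeTree M N → X → X
  | [], _ => id
  | m :: t, σ => f (σ []) m ∘ treeComp f t (fun j => σ (m :: j))

/-- The product `p^{σ(∅)}_{i₁} ⋯ p^{σ(i₁…i_{k-1})}_{i_k}` of the probabilities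
along the branch `i` of the construction tree of `σ`. -/
def treeProb {M N : ℕ} (p : Fin N → Fin M → NNReal) :
    List (Fin M) → CodeTree M N → NNReal
  | [], _ => 1
  | m :: t, σ => p (σ []) m * treeProb p t (fun j => σ (m :: j))

/-- The map `f^a : H(X)^V → H(X)^V` of the superIFS. -/
def applyIFS {X : Type*} [MetricSpace X] {M N V : ℕ} [NeZero M]
    (f : Fin N → Fin M → X → X) (hf : ∀ n m, Continuous (f n m))
    (a : IdxA M N V) (K : Fin V → NonemptyCompacts X) : Fin V → NonemptyCompacts X :=
  fun v =>
    ⟨⟨⋃ m, f (a v).1 m '' (K ((a v).2 m) : Set X),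
      isCompact_iUnion fun m => ((K ((a v).2 m)).isCompact).image (hf _ _)⟩,
      by
        obtain ⟨x, hx⟩ := (K ((a v).2 0)).nonempty
        exact ⟨f (a v).1 0 x, Set.mem_iUnion.mpr ⟨0, Set.mem_image_of_mem _ hx⟩⟩⟩


/-!
The level-`k` approximation `σ ↦ ⋃_{|i| = k} f^σ_i(X)` of the coding map depends only on the
first `k` levels of `σ`, so it is locally constant in `σ`, and it lies within Hausdorff distance
`l^k diam X` of `F σ`; hence `F` is a uniform limit of continuous maps, so it is continuous.
The level-`(k+1)` approximation of `ξ_n(τ)` is `⋃_m f^n_m` applied to the level-`k`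
approximations of the `τ_m`, and `K ↦ ⋃_m f^n_m(K_m)` is Lipschitz on `H(X)^M`, so passing to
the limit gives `F ∘ η^a = f^a ∘ F`. A continuous semiconjugacy maps the compact attractor `Ω_V`
onto a nonempty compact set invariant under the `f^a`, which is `H_V` by uniqueness of the
attractor; taking first components gives the last claim.
-/

open scoped Topology

theorem LipschitzWith.infEDist_image_le {α β : Type*} [PseudoEMetricSpace α]
    [PseudoEMetricSpace β] {K : NNReal} {g : α → β} (hg : LipschitzWith K g) (x : α)
    {t : Set α} (ht : t.Nonempty) : infEDist (g x) (g '' t) ≤ K * infEDist x t := by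
  obtain rfl | hK := eq_or_ne K 0
  · obtain ⟨y, hy⟩ := ht
    simpa using (infEDist_le_edist_of_mem (mem_image_of_mem g hy)).trans (hg x y)
  · simp only [infEDist, iInf_image,
      ENNReal.mul_iInf_of_ne (ENNReal.coe_ne_zero.2 hK) ENNReal.coe_ne_top]
    exact iInf₂_mono fun y _ => hg x y

theorem LipschitzWith.hausdorffEDist_image_le {α β : Type*} [PseudoEMetricSpace α]
    [PseudoEMetricSpace β] {K : NNReal} {g : α → β} (hg : LipschitzWith K g) {s t : Set α}
    (hs : s.Nonempty) (ht : t.Nonempty) :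
    hausdorffEDist (g '' s) (g '' t) ≤ K * hausdorffEDist s t := by
  refine hausdorffEDist_le_of_infEDist ?_ ?_
  · rintro _ ⟨x, hx, rfl⟩
    exact (hg.infEDist_image_le x ht).trans
      (by gcongr; exact infEDist_le_hausdorffEDist_of_mem hx)
  · rintro _ ⟨x, hx, rfl⟩
    rw [hausdorffEDist_comm]
    exact (hg.infEDist_image_le x hs).trans
      (by gcongr; exact infEDist_le_hausdorffEDist_of_mem hx)

def unionImage {X ι : Type*} [Finite ι] [Nonempty ι] [TopologicalSpace X] (g : ι → X → X)
    (hg : ∀ i, Continuous (g i)) (K : ι → NonemptyCompacts X) : NonemptyCompacts X :=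
  ⟨⟨⋃ i, g i '' (K i : Set X), isCompact_iUnion fun i => (K i).isCompact.image (hg i)⟩, by
    obtain ⟨i⟩ := ‹Nonempty ι›
    obtain ⟨x, hx⟩ := (K i).nonempty
    exact ⟨g i x, mem_iUnion.2 ⟨i, mem_image_of_mem _ hx⟩⟩⟩

theorem lipschitzWith_unionImage {X ι : Type*} [Fintype ι] [Nonempty ι] [EMetricSpace X]
    {K : NNReal} {g : ι → X → X} (hg : ∀ i, LipschitzWith K (g i)) :
    LipschitzWith K (unionImage g fun i => (hg i).continuous) := fun S T =>
  calc hausdorffEDist (⋃ i, g i '' (S i : Set X)) (⋃ i, g i '' (T i : Set X))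
      ≤ ⨆ i, hausdorffEDist (g i '' (S i : Set X)) (g i '' (T i : Set X)) :=
        hausdorffEDist_iUnion_le
    _ ≤ ⨆ i, K * edist (S i) (T i) :=
        iSup_mono fun i => (hg i).hausdorffEDist_image_le (S i).nonempty (T i).nonempty
    _ ≤ K * edist S T := iSup_le fun i => by gcongr; exact edist_le_pi_edist S T i

theorem image_eq_of_semiconj {α β ι : Type*} [TopologicalSpace α] [TopologicalSpace β]
    {η : ι → α → α} {φ : ι → β → β} {g : α → β} (hg : Continuous g)
    (hconj : ∀ i, Function.Semiconj g (η i) (φ i)) {S : Set α} (hSne : S.Nonempty)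
    (hS : IsCompact S) (hSinv : S = ⋃ i, η i '' S) {T : Set β}
    (hT : ∀ R : Set β, R.Nonempty → IsCompact R → R = ⋃ i, φ i '' R → R = T) :
    g '' S = T := by
  refine hT _ (hSne.image g) (hS.image hg) ?_
  conv_lhs => rw [hSinv]
  simp only [image_iUnion, fun i => (hconj i).set_image S]

namespace CodeTree

variable {M N : ℕ} [NeZero M]

theorem eq_of_dist_lt_pow {σ κ : CodeTree M N} {k : ℕ} (h : dist σ κ < (1 / (M : ℝ)) ^ k)
    {i : List (Fin M)} (hi : i.length < k) : σ i = κ i := by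
  classical
  by_contra hne
  have hσκ : σ ≠ κ := fun h => hne (congrFun h i)
  have hM : (1 : ℝ) ≤ M := by exact_mod_cast Nat.one_le_iff_ne_zero.mpr (NeZero.ne M)
  have hfind : Nat.find (codetree_exists_disagree hσκ) ≤ k :=
    (Nat.find_le ⟨i, rfl, hne⟩).trans hi.le
  have hdist : dist σ κ = (1 / (M : ℝ)) ^ Nat.find (codetree_exists_disagree hσκ) := by
    change treeDist σ κ = _
    rw [treeDist, dif_neg hσκ]
  rw [hdist] at h
  exact h.not_ge
    (pow_le_pow_of_le_one (by positivity) (div_le_one_of_le₀ hM (by positivity)) hfind)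

end CodeTree

section TreeComp

variable {X : Type*} {M N : ℕ} (f : Fin N → Fin M → X → X)

theorem treeComp_append (i t : List (Fin M)) (σ : CodeTree M N) :
    treeComp f (i ++ t) σ = treeComp f i σ ∘ treeComp f t (fun j => σ (i ++ j)) := by
  induction i generalizing σ with
  | nil => rfl
  | cons m i ih => exact congrArg (f (σ []) m ∘ ·) (ih _)

theorem treeComp_congr :
    ∀ (i : List (Fin M)) {σ κ : CodeTree M N},
      (∀ j : List (Fin M), j.length < i.length → σ j = κ j) → treeComp f i σ = treeComp f i κ
  | [], _, _, _ => rfl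
  | m :: t, σ, κ, h => by
    have hroot : σ [] = κ [] := h [] (by simp)
    have hsub := treeComp_congr t (σ := fun j => σ (m :: j)) (κ := fun j => κ (m :: j))
      fun j hj => h (m :: j) (by simpa using hj)
    simp only [treeComp, hroot, hsub]

theorem lipschitzWith_treeComp [PseudoEMetricSpace X] {l : NNReal}
    (hf : ∀ n m, LipschitzWith l (f n m)) (i : List (Fin M)) (σ : CodeTree M N) :
    LipschitzWith (l ^ i.length) (treeComp f i σ) := by
  induction i generalizing σ with
  | nil => exact (pow_zero l).symm ▸ LipschitzWith.id
  | cons m t ih =>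
    rw [List.length_cons, pow_succ']
    exact (hf (σ []) m).comp (ih _)

end TreeComp

section TreeApprox

variable {X : Type*} {M N : ℕ} (f : Fin N → Fin M → X → X)

def treeApprox (k : ℕ) (σ : CodeTree M N) : Set X :=
  ⋃ (i : List (Fin M)) (_ : i.length = k), treeComp f i σ '' univ

theorem treeApprox_zero (σ : CodeTree M N) : treeApprox f 0 σ = univ :=
  eq_univ_of_forall fun x => mem_iUnion₂.2 ⟨[], rfl, x, mem_univ x, rfl⟩

theorem treeApprox_succ (k : ℕ) (σ : CodeTree M N) :
    treeApprox f (k + 1) σ = ⋃ m, f (σ []) m '' treeApprox f k (fun j => σ (m :: j)) := by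
  ext x
  simp only [treeApprox, mem_iUnion, mem_image]
  constructor
  · rintro ⟨_ | ⟨m, t⟩, ht, y, hy, rfl⟩
    · cases ht
    exact ⟨m, _, ⟨t, Nat.succ_injective ht, y, hy, rfl⟩, rfl⟩
  · rintro ⟨m, z, ⟨t, ht, y, hy, rfl⟩, rfl⟩
    exact ⟨m :: t, by simp [ht], y, hy, rfl⟩

theorem treeApprox_anti {k j : ℕ} (h : k ≤ j) (σ : CodeTree M N) :
    treeApprox f j σ ⊆ treeApprox f k σ := by
  simp only [treeApprox, iUnion_subset_iff]
  rintro i rfl _ ⟨y, -, rfl⟩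
  refine mem_iUnion₂.2 ⟨i.take k, by simp [h],
    treeComp f (i.drop k) (fun j => σ (i.take k ++ j)) y, mem_univ _, ?_⟩
  conv_rhs => rw [← List.take_append_drop k i, treeComp_append]
  rfl

theorem treeApprox_congr {k : ℕ} {σ κ : CodeTree M N}
    (h : ∀ i : List (Fin M), i.length < k → σ i = κ i) :
    treeApprox f k σ = treeApprox f k κ :=
  iUnion₂_congr fun i hi => by rw [treeComp_congr f i fun j hj => h j (hi ▸ hj)]

theorem treeApprox_nonempty [NeZero M] [Nonempty X] (k : ℕ) (σ : CodeTree M N) :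
    (treeApprox f k σ).Nonempty := by
  induction k generalizing σ with
  | zero => simp [treeApprox_zero]
  | succ k ih =>
    obtain ⟨x, hx⟩ := ih (fun j => σ (0 :: j))
    rw [treeApprox_succ]
    exact ⟨_, mem_iUnion.2 ⟨0, mem_image_of_mem _ hx⟩⟩

theorem isCompact_treeApprox [TopologicalSpace X] [CompactSpace X]
    (hf : ∀ n m, Continuous (f n m)) (k : ℕ) (σ : CodeTree M N) :
    IsCompact (treeApprox f k σ) := by
  induction k generalizing σ with
  | zero => simpa [treeApprox_zero] using isCompact_univ
  | succ k ih =>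
    rw [treeApprox_succ]
    exact isCompact_iUnion fun m => (ih _).image (hf _ _)

theorem hausdorffDist_treeApprox_le [NeZero M] [MetricSpace X] [CompactSpace X] {l : NNReal}
    (hf : ∀ n m, LipschitzWith l (f n m)) {k j : ℕ} (h : k ≤ j) (σ : CodeTree M N) :
    hausdorffDist (treeApprox f k σ) (treeApprox f j σ) ≤ l ^ k * diam (univ : Set X) := by
  have hr : 0 ≤ (l : ℝ) ^ k * diam (univ : Set X) := by positivity
  refine hausdorffDist_le_of_mem_dist hr ?_ fun x hx => ⟨x, treeApprox_anti f h σ hx, by simpa⟩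
  simp only [treeApprox, mem_iUnion₂]
  rintro _ ⟨i, hi, y, -, rfl⟩
  set t := List.replicate (j - k) (0 : Fin M)
  refine ⟨treeComp f (i ++ t) σ y, ⟨i ++ t, by simp [t, hi, h], y, mem_univ y, rfl⟩, ?_⟩
  rw [treeComp_append]
  calc dist (treeComp f i σ y) (treeComp f i σ (treeComp f t _ y))
      ≤ l ^ i.length * dist y (treeComp f t _ y) := by
        simpa using (lipschitzWith_treeComp f hf i σ).dist_le_mul _ _
    _ ≤ l ^ k * diam (univ : Set X) := by
        rw [hi]
        gcongr
        exact dist_le_diam_of_mem isBounded_of_compactSpace (mem_univ _) (mem_univ _)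

end TreeApprox

section CodingMap

variable {X : Type*} [MetricSpace X] [CompactSpace X] [Nonempty X] {M N : ℕ} [NeZero M]
  {f : Fin N → Fin M → X → X} {l : NNReal} (hf : ∀ n m, LipschitzWith l (f n m))

def treeApproxCompacts (k : ℕ) (σ : CodeTree M N) : NonemptyCompacts X :=
  ⟨⟨treeApprox f k σ, isCompact_treeApprox f (fun n m => (hf n m).continuous) k σ⟩,
    treeApprox_nonempty f k σ⟩

theorem dist_treeApproxCompacts_le {k j : ℕ} (h : k ≤ j) (σ : CodeTree M N) :
    dist (treeApproxCompacts hf k σ) (treeApproxCompacts hf j σ) ≤ l ^ k * diam (univ : Set X) :=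
  NonemptyCompacts.dist_eq.trans_le (hausdorffDist_treeApprox_le f hf h σ)

theorem continuous_treeApproxCompacts (k : ℕ) :
    Continuous (treeApproxCompacts hf k : CodeTree M N → NonemptyCompacts X) := by
  have hM : (0 : ℝ) < M := by exact_mod_cast NeZero.pos M
  refine Metric.continuous_iff.2 fun σ ε hε => ⟨(1 / (M : ℝ)) ^ k, by positivity, fun κ hκ => ?_⟩
  have hagree : treeApproxCompacts hf k κ = treeApproxCompacts hf k σ :=
    NonemptyCompacts.ext (treeApprox_congr f fun i hi => CodeTree.eq_of_dist_lt_pow hκ hi)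
  rwa [hagree, dist_self]

theorem treeApproxCompacts_succ_xi (k : ℕ) (n : Fin N) (τ : Fin M → CodeTree M N) :
    treeApproxCompacts hf (k + 1) (xi n τ) =
      unionImage (f n) (fun m => (hf n m).continuous) (fun m => treeApproxCompacts hf k (τ m)) :=
  NonemptyCompacts.ext (treeApprox_succ f k (xi n τ))

variable {Fc : CodeTree M N → NonemptyCompacts X}
  (hFc : ∀ σ, Tendsto (fun k => treeApproxCompacts hf k σ) atTop (𝓝 (Fc σ)))
include hFc

theorem dist_treeApproxCompacts_le_of_tendsto (k : ℕ) (σ : CodeTree M N) :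
    dist (treeApproxCompacts hf k σ) (Fc σ) ≤ l ^ k * diam (univ : Set X) :=
  le_of_tendsto (tendsto_const_nhds.dist (hFc σ))
    (eventually_atTop.2 ⟨k, fun _ hj => dist_treeApproxCompacts_le hf hj σ⟩)

theorem continuous_of_tendsto_treeApproxCompacts (hl : l < 1) : Continuous Fc := by
  have hbound : Tendsto (fun k => (l : ℝ) ^ k * diam (univ : Set X)) atTop (𝓝 0) := by
    simpa using (tendsto_pow_atTop_nhds_zero_of_lt_one l.coe_nonneg hl).mul_const _
  have hunif : TendstoUniformly (treeApproxCompacts hf) Fc atTop :=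
    Metric.tendstoUniformly_iff.2 fun ε hε =>
      (hbound.eventually (gt_mem_nhds hε)).mono fun k hk σ =>
        (dist_comm _ _).trans_le (dist_treeApproxCompacts_le_of_tendsto hf hFc k σ) |>.trans_lt hk
  exact hunif.continuous (Frequently.of_forall (continuous_treeApproxCompacts hf))

theorem apply_xi_of_tendsto_treeApproxCompacts (n : Fin N) (τ : Fin M → CodeTree M N) :
    Fc (xi n τ) = unionImage (f n) (fun m => (hf n m).continuous) (fun m => Fc (τ m)) := by
  refine tendsto_nhds_unique ((hFc (xi n τ)).comp (tendsto_add_atTop_nat 1)) ?_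
  simp only [Function.comp_def, treeApproxCompacts_succ_xi]
  exact ((lipschitzWith_unionImage (hf n)).continuous.tendsto _).comp
    (tendsto_pi_nhds.2 fun m => hFc (τ m))

end CodingMap

theorem stmt_16_general {X : Type*} [MetricSpace X] [CompactSpace X] [Nonempty X]
    {M N V : ℕ} [NeZero M] [NeZero V]
    (f : Fin N → Fin M → X → X) (l : NNReal) (hl : l < 1)
    (hf : ∀ n m, LipschitzWith l (f n m))
    (Fc : CodeTree M N → NonemptyCompacts X)
    (hFc : ∀ (σ : CodeTree M N) (K : Set X), K.Nonempty → IsCompact K →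
      Tendsto (fun k => hausdorffDist
          (⋃ (i : List (Fin M)) (_ : i.length = k), treeComp f i σ '' K) (Fc σ : Set X))
        atTop (nhds 0))
    (ΩV : Set (Fin V → CodeTree M N))
    (hΩne : ΩV.Nonempty) (hΩcomp : IsCompact ΩV)
    (hΩinv : ΩV = ⋃ a : IdxA M N V, eta a '' ΩV)
    (HV : Set (Fin V → NonemptyCompacts X))
    (hHuniq : ∀ S : Set (Fin V → NonemptyCompacts X), S.Nonempty → IsCompact S →
      S = ⋃ a : IdxA M N V, applyIFS f (fun n m => (hf n m).continuous) a '' S → S = HV) :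
    (∀ (a : IdxA M N V) (ω : Fin V → CodeTree M N),
      (fun v => Fc (eta a ω v)) =
        applyIFS f (fun n m => (hf n m).continuous) a (fun v => Fc (ω v))) ∧
    ((fun (ω : Fin V → CodeTree M N) (v : Fin V) => Fc (ω v)) '' ΩV = HV) ∧
    (Fc '' {σ : CodeTree M N | ∃ ω ∈ ΩV, ω 0 = σ} =
      {K : NonemptyCompacts X | ∃ ω ∈ HV, ω 0 = K}) := by
  have hlim : ∀ σ, Tendsto (fun k => treeApproxCompacts hf k σ) atTop (𝓝 (Fc σ)) := fun σ =>
    tendsto_iff_dist_tendsto_zero.2 (hFc σ univ univ_nonempty isCompact_univ)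
  have hconj : ∀ (a : IdxA M N V) (ω : Fin V → CodeTree M N),
      (fun v => Fc (eta a ω v)) =
        applyIFS f (fun n m => (hf n m).continuous) a (fun v => Fc (ω v)) := fun a ω =>
    funext fun v => apply_xi_of_tendsto_treeApproxCompacts hf hlim _ _
  have hcont : Continuous Fc := continuous_of_tendsto_treeApproxCompacts hf hlim hl
  have himage : (fun (ω : Fin V → CodeTree M N) (v : Fin V) => Fc (ω v)) '' ΩV = HV :=
    image_eq_of_semiconj (continuous_pi fun v => hcont.comp (continuous_apply v))
      hconj hΩne hΩcomp hΩinv hHuniq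
  refine ⟨hconj, himage, ?_⟩
  change Fc '' ((· 0) '' ΩV) = (· 0) '' HV
  rw [← himage, image_image, image_image]

/-- **Conjugacy of the tree IFS and the superIFS.** Let `F : Ω → H(X)` be the coding map
of the superIFS, extended componentwise to `Ω^V → H(X)^V`.  Then `F ∘ η^a = f^a ∘ F` for
every `a ∈ A`; consequently `F(Ω_V) = H_V` and `F(Ω_{V,1}) = H_{V,1}`, where `Ω_V` and
`H_V` are the set attractors of `{Ω^V; η^a}` and `{H(X)^V; f^a}` and `Ω_{V,1}`, `H_{V,1}`
are their sets of first components. -/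
theorem stmt_16 {X : Type*} [MetricSpace X] [CompactSpace X] [Nonempty X]
    {M N V : ℕ} [NeZero M] [NeZero V] (hN : 0 < N)
    (f : Fin N → Fin M → X → X) (l : NNReal) (hl : l < 1)
    (hf : ∀ n m, LipschitzWith l (f n m))
    (Fc : CodeTree M N → NonemptyCompacts X)
    (hFc : ∀ (σ : CodeTree M N) (K : Set X), K.Nonempty → IsCompact K →
      Tendsto (fun k => hausdorffDist
          (⋃ (i : List (Fin M)) (_ : i.length = k), treeComp f i σ '' K) (Fc σ : Set X))
        atTop (nhds 0))
    (ΩV : Set (Fin V → CodeTree M N))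
    (hΩne : ΩV.Nonempty) (hΩcomp : IsCompact ΩV)
    (hΩinv : ΩV = ⋃ a : IdxA M N V, eta a '' ΩV)
    (hΩuniq : ∀ S : Set (Fin V → CodeTree M N), S.Nonempty → IsCompact S →
      S = ⋃ a : IdxA M N V, eta a '' S → S = ΩV)
    (HV : Set (Fin V → NonemptyCompacts X))
    (hHne : HV.Nonempty) (hHcomp : IsCompact HV)
    (hHinv : HV = ⋃ a : IdxA M N V,
      applyIFS f (fun n m => (hf n m).continuous) a '' HV)
    (hHuniq : ∀ S : Set (Fin V → NonemptyCompacts X), S.Nonempty → IsCompact S →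
      S = ⋃ a : IdxA M N V, applyIFS f (fun n m => (hf n m).continuous) a '' S → S = HV) :
    (∀ (a : IdxA M N V) (ω : Fin V → CodeTree M N),
      (fun v => Fc (eta a ω v)) =
        applyIFS f (fun n m => (hf n m).continuous) a (fun v => Fc (ω v))) ∧
    ((fun (ω : Fin V → CodeTree M N) (v : Fin V) => Fc (ω v)) '' ΩV = HV) ∧
    (Fc '' {σ : CodeTree M N | ∃ ω ∈ ΩV, ω 0 = σ} =
      {K : NonemptyCompacts X | ∃ ω ∈ HV, ω 0 = K}) :=
  stmt_16_general f l hl hf Fc hFc ΩV hΩne hΩcomp hΩinv HV hHuniq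
end

section
/- Let F^1, ..., F^N be IFSs with probabilities on a compact metric space (X, d), all with common Lipschitz constant 0 ≤ l < 1, fix a positive integer V, and let H_V be the set attractor of the IFS {H(X)^V; f^a, a ∈ A}. Then for every v ∈ {1, ..., V}, the set H_{V,v} of v-th components of elements of H_V equals the set H_{V,1} of first components of elements of H_V. -/
open Metric MeasureTheory Filter Set TopologicalSpace

/-- Reindexing of the superIFS index under a permutation of the coordinates. -/
def permIdx {M N V : ℕ} (σ : Equiv.Perm (Fin V)) (a : IdxA M N V) : IdxA M N V :=
  fun v => ((a (σ v)).1, fun m => σ.symm ((a (σ v)).2 m))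

lemma permIdx_surjective {M N V : ℕ} (σ : Equiv.Perm (Fin V)) :
    Function.Surjective (permIdx (M := M) (N := N) σ) := by
  intro b
  refine ⟨fun v => ((b (σ.symm v)).1, fun m => σ ((b (σ.symm v)).2 m)), ?_⟩
  funext v
  simp [permIdx]

lemma applyIFS_comp_perm {X : Type*} [MetricSpace X] {M N V : ℕ} [NeZero M]
    (f : Fin N → Fin M → X → X) (hf : ∀ n m, Continuous (f n m))
    (σ : Equiv.Perm (Fin V)) (a : IdxA M N V) (K : Fin V → NonemptyCompacts X) :
    (applyIFS f hf a K) ∘ σ = applyIFS f hf (permIdx σ a) (K ∘ σ) := by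
  funext v
  apply NonemptyCompacts.ext
  simp [applyIFS, permIdx]

/-- **The components of `H_V` coincide.** Let `H_V` be the set attractor of the IFS
`{H(X)^V; f^a, a ∈ A}`.  Then for every `v`, the set of `v`-th components of elements of
`H_V` equals the set of first components. -/
theorem stmt_17 {X : Type*} [MetricSpace X] [CompactSpace X] [Nonempty X]
    {M N V : ℕ} [NeZero M] [NeZero V] (hN : 0 < N)
    (f : Fin N → Fin M → X → X) (l : NNReal) (hl : l < 1)
    (hf : ∀ n m, LipschitzWith l (f n m))
    (p : Fin N → Fin M → NNReal) (hp : ∀ n, ∑ m, p n m = 1)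
    (HV : Set (Fin V → NonemptyCompacts X))
    (hHne : HV.Nonempty) (hHcomp : IsCompact HV)
    (hHinv : HV = ⋃ a : IdxA M N V,
      applyIFS f (fun n m => (hf n m).continuous) a '' HV)
    (hHuniq : ∀ S : Set (Fin V → NonemptyCompacts X), S.Nonempty → IsCompact S →
      S = ⋃ a : IdxA M N V, applyIFS f (fun n m => (hf n m).continuous) a '' S → S = HV) :
    ∀ v : Fin V, {K : NonemptyCompacts X | ∃ ω ∈ HV, ω v = K} =
      {K : NonemptyCompacts X | ∃ ω ∈ HV, ω 0 = K} := by
  intro v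
  set hfc := fun n m => (hf n m).continuous
  -- For any permutation σ, the set HV is invariant under K ↦ K ∘ σ.
  have key : ∀ σ : Equiv.Perm (Fin V), (fun K : Fin V → NonemptyCompacts X => K ∘ σ) '' HV = HV := by
    intro σ
    set P := fun K : Fin V → NonemptyCompacts X => K ∘ σ with hP
    have hPc : Continuous P := continuous_pi fun w => continuous_apply (σ w)
    apply hHuniq
    · exact hHne.image P
    · exact hHcomp.image hPc
    · conv_lhs => rw [hHinv]
      rw [Set.image_iUnion]
      have h1 : ∀ a : IdxA M N V, P '' (applyIFS f hfc a '' HV)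
          = applyIFS f hfc (permIdx σ a) '' (P '' HV) := by
        intro a
        rw [← Set.image_comp, ← Set.image_comp]
        apply Set.image_congr
        intro K _
        exact applyIFS_comp_perm f hfc σ a K
      rw [Set.iUnion_congr h1]
      exact (permIdx_surjective (M := M) (N := N) σ).iUnion_comp
        fun b => applyIFS f hfc b '' (P '' HV)
  ext K
  simp only [Set.mem_setOf_eq]
  constructor
  · rintro ⟨ω, hω, rfl⟩
    refine ⟨ω ∘ Equiv.swap 0 v, ?_, ?_⟩
    · rw [← key (Equiv.swap 0 v)]; exact Set.mem_image_of_mem _ hω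
    · simp [Equiv.swap_apply_left]
  · rintro ⟨ω, hω, rfl⟩
    refine ⟨ω ∘ Equiv.swap 0 v, ?_, ?_⟩
    · rw [← key (Equiv.swap 0 v)]; exact Set.mem_image_of_mem _ hω
    · simp [Equiv.swap_apply_right]
end

section
/- Let F^1, ..., F^N be IFSs with probabilities on a compact metric space (X, d), all with common Lipschitz constant 0 ≤ l < 1, fix a positive integer V, and let H_{V,1} be the corresponding superfractal (the set of first components of the set attractor H_V of the IFS {H(X)^V; f^a, a ∈ A}). Let A ∈ H_{V,1} be a V-variable fractal set and let ε > 0. Then there exist n ∈ ℕ, nonempty compact sets K_1, ..., K_V ⊆ X, a finite index set J, and for each j ∈ J an index v_j ∈ {1, ..., V} and a continuous map g_j : X → X which is a composition of n of the maps f^{n'}_m (drawn from F^1, ..., F^N), such that A = ⋃_{j∈J} g_j(K_{v_j}) and the diameter of g_j(K_{v_j}) is at most ε for every j ∈ J. -/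
open Metric MeasureTheory Filter Set TopologicalSpace

/-- `IsCompOf f n g` says that `g` is a composition of `n` of the maps `f^{n'}_m`
of the superIFS. -/
def IsCompOf {X : Type*} {M N : ℕ} (f : Fin N → Fin M → X → X) : ℕ → (X → X) → Prop
  | 0, g => g = id
  | k + 1, g => ∃ (n : Fin N) (m : Fin M) (g' : X → X), IsCompOf f k g' ∧ g = f n m ∘ g'

lemma isCompOf_lipschitz {X : Type*} [MetricSpace X] {M N : ℕ}
    (f : Fin N → Fin M → X → X) (l : NNReal) (hf : ∀ n m, LipschitzWith l (f n m)) :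
    ∀ n g, IsCompOf f n g → LipschitzWith (l ^ n) g := by
  intro n
  induction n with
  | zero => intro g hg; rw [hg]; simpa using LipschitzWith.id
  | succ k ih =>
    rintro g ⟨n', m, g', hg', rfl⟩
    have := (hf n' m).comp (ih g' hg')
    rwa [show l * l ^ k = l ^ (k+1) by ring] at this

lemma decomp {X : Type*} [MetricSpace X] {M N V : ℕ} [NeZero M] [NeZero V]
    (f : Fin N → Fin M → X → X) (l : NNReal)
    (hf : ∀ n m, LipschitzWith l (f n m))
    (HV : Set (Fin V → NonemptyCompacts X))
    (hHinv : HV = ⋃ a : IdxA M N V,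
      applyIFS f (fun n m => (hf n m).continuous) a '' HV) :
    ∀ n : ℕ, ∀ ω ∈ HV, ∃ ω' ∈ HV,
      ∀ v : Fin V, ∃ (J : ℕ) (vj : Fin J → Fin V) (gj : Fin J → X → X),
        (∀ j, IsCompOf f n (gj j)) ∧ (ω v : Set X) = ⋃ j, gj j '' (ω' (vj j) : Set X) := by
  intro n
  induction n with
  | zero =>
    intro ω hω
    refine ⟨ω, hω, fun v => ⟨1, fun _ => v, fun _ => id, fun _ => rfl, ?_⟩⟩
    simp only [Set.image_id]
    exact (Set.iUnion_const _).symm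
  | succ k ih =>
    intro ω hω
    rw [hHinv] at hω
    obtain ⟨a, ω₁, hω₁, rfl⟩ := by simpa using hω
    obtain ⟨ω', hω', hdec⟩ := ih ω₁ hω₁
    refine ⟨ω', hω', fun v => ?_⟩
    choose J vj gj hcomp heq using fun m : Fin M => hdec ((a v).2 m)
    let ι := Σ m : Fin M, Fin (J m)
    let e : Fin (Fintype.card ι) ≃ ι := (Fintype.equivFin ι).symm
    refine ⟨Fintype.card ι, fun j => vj (e j).1 (e j).2,
      fun j => f (a v).1 (e j).1 ∘ gj (e j).1 (e j).2,
      fun j => ⟨(a v).1, (e j).1, gj (e j).1 (e j).2, hcomp _ _, rfl⟩, ?_⟩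
    have h1 : (applyIFS f (fun n m => (hf n m).continuous) a ω₁ v : Set X)
        = ⋃ m, f (a v).1 m '' (ω₁ ((a v).2 m) : Set X) := rfl
    rw [h1]
    have h2 : ∀ m : Fin M, f (a v).1 m '' (ω₁ ((a v).2 m) : Set X)
        = ⋃ j : Fin (J m), (f (a v).1 m ∘ gj m j) '' (ω' (vj m j) : Set X) := by
      intro m
      rw [heq m, Set.image_iUnion]
      exact Set.iUnion_congr fun j => (Set.image_comp _ _ _).symm
    calc ⋃ m, f (a v).1 m '' (ω₁ ((a v).2 m) : Set X)
        = ⋃ m, ⋃ j : Fin (J m), (f (a v).1 m ∘ gj m j) '' (ω' (vj m j) : Set X) :=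
          Set.iUnion_congr h2
      _ = ⋃ s : ι, (f (a v).1 s.1 ∘ gj s.1 s.2) '' (ω' (vj s.1 s.2) : Set X) :=
          (Set.iUnion_sigma (fun s : ι => (f (a v).1 s.1 ∘ gj s.1 s.2) '' (ω' (vj s.1 s.2) : Set X))).symm
      _ = ⋃ j : Fin (Fintype.card ι),
            (f (a v).1 (e j).1 ∘ gj (e j).1 (e j).2) '' (ω' (vj (e j).1 (e j).2) : Set X) :=
          (e.iSup_comp (g := fun s : ι =>
            (f (a v).1 s.1 ∘ gj s.1 s.2) '' (ω' (vj s.1 s.2) : Set X))).symm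

/-- **Shapes and forms theorem.** Let `A ∈ H_{V,1}` be a `V`-variable fractal set of the
superIFS and let `ε > 0`.  Then `A` is a finite union of continuous transformations
(compositions of the maps of the superIFS) of at most `V` distinct nonempty compact
subsets of `X`, each transformed set having diameter at most `ε`. -/
theorem stmt_18 {X : Type*} [MetricSpace X] [CompactSpace X] [Nonempty X]
    {M N V : ℕ} [NeZero M] [NeZero V] (hN : 0 < N)
    (f : Fin N → Fin M → X → X) (l : NNReal) (hl : l < 1)
    (hf : ∀ n m, LipschitzWith l (f n m))
    (p : Fin N → Fin M → NNReal) (hp : ∀ n, ∑ m, p n m = 1)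
    (HV : Set (Fin V → NonemptyCompacts X))
    (hHne : HV.Nonempty) (hHcomp : IsCompact HV)
    (hHinv : HV = ⋃ a : IdxA M N V,
      applyIFS f (fun n m => (hf n m).continuous) a '' HV)
    (hHuniq : ∀ S : Set (Fin V → NonemptyCompacts X), S.Nonempty → IsCompact S →
      S = ⋃ a : IdxA M N V, applyIFS f (fun n m => (hf n m).continuous) a '' S → S = HV)
    (A : Set X) (hA : ∃ ω ∈ HV, (ω 0 : Set X) = A)
    (ε : ℝ) (hε : 0 < ε) :
    ∃ (n J : ℕ) (vj : Fin J → Fin V) (gj : Fin J → X → X) (K : Fin V → Set X),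
      (∀ v, (K v).Nonempty ∧ IsCompact (K v)) ∧
      (∀ j, Continuous (gj j) ∧ IsCompOf f n (gj j)) ∧
      A = ⋃ j, gj j '' K (vj j) ∧
      (∀ j, Metric.diam (gj j '' K (vj j)) ≤ ε) := by
  obtain ⟨ω, hω, hωA⟩ := hA
  -- choose n with l^n * diam univ ≤ ε
  have htend : Tendsto (fun n : ℕ => (l : ℝ) ^ n * Metric.diam (Set.univ : Set X))
      atTop (nhds 0) := by
    simpa using (tendsto_pow_atTop_nhds_zero_of_lt_one (l.coe_nonneg)
      (by exact_mod_cast hl)).mul_const (Metric.diam (Set.univ : Set X))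
  obtain ⟨n, hn⟩ := (htend.eventually (eventually_le_nhds hε)).exists
  obtain ⟨ω', hω', hdec⟩ := decomp f l hf HV hHinv n ω hω
  obtain ⟨J, vj, gj, hcomp, heq⟩ := hdec 0
  refine ⟨n, J, vj, gj, fun v => (ω' v : Set X), fun v => ⟨(ω' v).nonempty, (ω' v).isCompact⟩,
    fun j => ⟨(isCompOf_lipschitz f l hf n _ (hcomp j)).continuous, hcomp j⟩,
    by rw [← hωA]; exact heq, fun j => ?_⟩
  have hlip := isCompOf_lipschitz f l hf n _ (hcomp j)
  have hb : Bornology.IsBounded (ω' (vj j) : Set X) := (ω' (vj j)).isCompact.isBounded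
  calc Metric.diam (gj j '' (ω' (vj j) : Set X))
      ≤ (l : ℝ) ^ n * Metric.diam (ω' (vj j) : Set X) := by
        simpa using hlip.diam_image_le _ hb
    _ ≤ (l : ℝ) ^ n * Metric.diam (Set.univ : Set X) := by
        apply mul_le_mul_of_nonneg_left
          (Metric.diam_mono (Set.subset_univ _) isCompact_univ.isBounded)
          (by positivity)
    _ ≤ ε := hn
end

section
/- Let F^1, ..., F^N be IFSs with probabilities on a compact metric space (X, d), all with common Lipschitz constant 0 ≤ l < 1. Let H = {F(σ) : σ ∈ Ω} ⊆ H(X) be the set of random fractal sets of the superIFS, where F : Ω → H(X) is the code-tree coding map, and for each positive integer V let H_{V,1} be the superfractal (the set of first components of the set attractor H_V of the IFS {H(X)^V; f^a, a ∈ A}). Then lim_{V→∞} H_{V,1} = H in the Hausdorff metric on H(H(X)) induced by d_H; that is, for every ε > 0 there is V_0 such that for all V ≥ V_0 the Hausdorff distance between H_{V,1} and H in (H(X), d_H) is less than ε. -/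
open Metric MeasureTheory Filter Set TopologicalSpace
/-!
Both `H_{V,1}` and `H` consist of level sets `⋃_{|i| = k} f^σ_i (A i)` of code trees `σ` with
nonempty compact leaves `A i`. Unfolding the fixed-point equation of `H_V` `k` times writes every
component of a point of `H_V` in this form; conversely, once `V ≥ M ^ k` the at most `M ^ k` nodes
of each level of a tree fit into the `V` components, so every `σ`, cut at depth `k`, is a first
component. Along a branch of length `k` the maps contract by `l ^ k`, so each level-`k` set of `σ`
is within `l ^ k · diam X` of `F(σ)`, and `d_H(H_{V,1}, H) ≤ l ^ k · diam X` for `V ≥ M ^ k`.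
-/

open scoped Topology

section LevelUnion

variable {X : Type*} {M N : ℕ}

def CodeTree.subtree (σ : CodeTree M N) (i : List (Fin M)) : CodeTree M N :=
  fun s => σ (i ++ s)

theorem CodeTree.subtree_subtree (σ : CodeTree M N) (i j : List (Fin M)) :
    (σ.subtree i).subtree j = σ.subtree (i ++ j) := by
  funext s
  simp [CodeTree.subtree]

/-- The `k`-th level of the construction tree of `σ` with the set `A i` at the leaf `i`:
`⋃_{|i| = k} f^{σ(∅)}_{i₁} ∘ ⋯ ∘ f^{σ(i₁…i_{k-1})}_{i_k} (A i)`. -/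
def levelUnion (f : Fin N → Fin M → X → X) (k : ℕ) (σ : CodeTree M N)
    (A : List (Fin M) → Set X) : Set X :=
  ⋃ (i : List (Fin M)) (_ : i.length = k), treeComp f i σ '' A i

variable (f : Fin N → Fin M → X → X)

theorem levelUnion_zero (σ : CodeTree M N) (A : List (Fin M) → Set X) :
    levelUnion f 0 σ A = A [] := by
  simp [levelUnion, List.length_eq_zero_iff, treeComp]

theorem levelUnion_succ (k : ℕ) (σ : CodeTree M N) (A : List (Fin M) → Set X) :
    levelUnion f (k + 1) σ A =
      ⋃ m, f (σ []) m '' levelUnion f k (σ.subtree [m]) (fun t => A (m :: t)) := by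
  ext x
  simp only [levelUnion, image_iUnion, mem_iUnion]
  constructor
  · rintro ⟨_ | ⟨m, t⟩, hlen, hx⟩
    · simp at hlen
    · exact ⟨m, t, by simpa using hlen, by rwa [treeComp, image_comp] at hx⟩
  · rintro ⟨m, t, hlen, hx⟩
    exact ⟨m :: t, by simp [hlen], by rwa [treeComp, image_comp]⟩

theorem levelUnion_add (j : ℕ) :
    ∀ (k : ℕ) (σ : CodeTree M N) (A : List (Fin M) → Set X),
      levelUnion f (k + j) σ A =
        levelUnion f k σ fun i => levelUnion f j (σ.subtree i) (fun t => A (i ++ t))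
  | 0, σ, A => by rw [Nat.zero_add, levelUnion_zero]; rfl
  | k + 1, σ, A => by
    rw [Nat.add_right_comm, levelUnion_succ, levelUnion_succ]
    refine iUnion_congr fun m => ?_
    simp only [levelUnion_add j k, CodeTree.subtree_subtree, List.cons_append, List.nil_append]

theorem levelUnion_nonempty [NeZero M] (k : ℕ) (σ : CodeTree M N)
    {A : List (Fin M) → Set X} (hA : ∀ i, (A i).Nonempty) :
    (levelUnion f k σ A).Nonempty := by
  obtain ⟨x, hx⟩ := hA (List.replicate k 0)
  exact ⟨_, mem_iUnion₂.mpr ⟨_, by simp, mem_image_of_mem _ hx⟩⟩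

theorem treeComp_lipschitzWith [PseudoMetricSpace X] {l : NNReal}
    (hf : ∀ n m, LipschitzWith l (f n m)) :
    ∀ (i : List (Fin M)) (σ : CodeTree M N), LipschitzWith (l ^ i.length) (treeComp f i σ)
  | [], _ => by simpa [treeComp] using LipschitzWith.id
  | m :: t, σ => by
    rw [treeComp, List.length_cons, pow_succ']
    exact (hf (σ []) m).comp (treeComp_lipschitzWith hf t (σ.subtree [m]))

section Compact

variable [MetricSpace X] [CompactSpace X] {l : NNReal}

theorem exists_dist_le_of_mem_levelUnion (hf : ∀ n m, LipschitzWith l (f n m))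
    (k : ℕ) (σ : CodeTree M N) (A : List (Fin M) → Set X)
    {B : List (Fin M) → Set X} (hB : ∀ i, (B i).Nonempty) :
    ∀ x ∈ levelUnion f k σ A, ∃ y ∈ levelUnion f k σ B,
      dist x y ≤ l ^ k * diam (univ : Set X) := by
  intro x hx
  simp only [levelUnion, mem_iUnion, mem_image] at hx
  obtain ⟨i, rfl, a, -, rfl⟩ := hx
  obtain ⟨b, hb⟩ := hB i
  refine ⟨treeComp f i σ b, mem_iUnion₂.mpr ⟨i, rfl, mem_image_of_mem _ hb⟩, ?_⟩
  calc dist (treeComp f i σ a) (treeComp f i σ b)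
      ≤ (l ^ i.length : NNReal) * dist a b := (treeComp_lipschitzWith f hf i σ).dist_le_mul a b
    _ ≤ l ^ i.length * diam (univ : Set X) := by
      push_cast
      gcongr
      exact dist_le_diam_of_mem isCompact_univ.isBounded (mem_univ a) (mem_univ b)

theorem hausdorffDist_levelUnion_le (hf : ∀ n m, LipschitzWith l (f n m))
    (k : ℕ) (σ : CodeTree M N) {A B : List (Fin M) → Set X}
    (hA : ∀ i, (A i).Nonempty) (hB : ∀ i, (B i).Nonempty) :
    hausdorffDist (levelUnion f k σ A) (levelUnion f k σ B) ≤ l ^ k * diam (univ : Set X) :=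
  hausdorffDist_le_of_mem_dist (by positivity)
    (exists_dist_le_of_mem_levelUnion f hf k σ A hB)
    fun y hy => by
      obtain ⟨x, hx, hxy⟩ := exists_dist_le_of_mem_levelUnion f hf k σ B hA y hy
      exact ⟨x, hx, dist_comm x y ▸ hxy⟩

/-- The level `k + j` of `σ` with leaves `K` is itself a level-`k` set of `σ`, with leaves
the levels `j` of the subtrees; let `j → ∞`. -/
theorem hausdorffDist_levelUnion_le_of_tendsto [NeZero M]
    (hf : ∀ n m, LipschitzWith l (f n m)) (σ : CodeTree M N) {K F : Set X}
    (hK : K.Nonempty)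
    (hlim : Tendsto (fun j => hausdorffDist (levelUnion f j σ fun _ => K) F) atTop (𝓝 0))
    (k : ℕ) {A : List (Fin M) → Set X} (hA : ∀ i, (A i).Nonempty) :
    hausdorffDist (levelUnion f k σ A) F ≤ l ^ k * diam (univ : Set X) := by
  have hdeep : ∀ j, hausdorffDist (levelUnion f k σ A) F ≤
      l ^ k * diam (univ : Set X) + hausdorffDist (levelUnion f (j + k) σ fun _ => K) F := by
    intro j
    rw [Nat.add_comm j k]
    have hleaves : ∀ i, (levelUnion f j (σ.subtree i) fun _ => K).Nonempty :=
      fun i => levelUnion_nonempty f j _ fun _ => hK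
    have hfin := hausdorffEDist_ne_top_of_nonempty_of_bounded
      (levelUnion_nonempty f k σ hA) (levelUnion_nonempty f (k + j) σ fun _ => hK)
      (isCompact_univ.isBounded.subset (subset_univ _))
      (isCompact_univ.isBounded.subset (subset_univ _))
    have hlevel := hausdorffDist_levelUnion_le f hf k σ hA hleaves
    rw [← levelUnion_add f j k σ fun _ => K] at hlevel
    linarith [hausdorffDist_triangle (u := F) hfin]
  refine ge_of_tendsto' (x := atTop) ?_ hdeep
  simpa using tendsto_const_nhds.add (hlim.comp (tendsto_add_atTop_nat k))

end Compact

end LevelUnion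

section Attractor

variable {X : Type*} [MetricSpace X] {M N V : ℕ} [NeZero M]
  (f : Fin N → Fin M → X → X) (hf : ∀ n m, Continuous (f n m))

theorem exists_coe_eq_levelUnion_of_subset_iUnion (hN : 0 < N)
    {S : Set (Fin V → NonemptyCompacts X)}
    (hS : S ⊆ ⋃ a, applyIFS f hf a '' S) (k : ℕ) :
    ∀ ω ∈ S, ∀ v, ∃ (σ : CodeTree M N) (K : List (Fin M) → NonemptyCompacts X),
      (ω v : Set X) = levelUnion f k σ fun i => K i := by
  induction k with
  | zero =>
    intro ω _ v
    exact ⟨fun _ => ⟨0, hN⟩, fun _ => ω v,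
      (levelUnion_zero f (fun _ => ⟨0, hN⟩) fun _ => (ω v : Set X)).symm⟩
  | succ k ih =>
    intro ω hω v
    obtain ⟨a, κ, hκ, rfl⟩ := mem_iUnion.mp (hS hω)
    choose σ K hσK using fun m => ih κ hκ ((a v).2 m)
    refine ⟨xi (a v).1 σ, fun i => K (i.headD 0) i.tail, ?_⟩
    rw [levelUnion_succ]
    exact iUnion_congr fun m => by rw [hσK m]; rfl

/-- The `c * M` subtrees just below the roots are realised one level lower, the `m`-th child
of tree `v` as component `v * M + m`, and a single map `f^a` grafts them onto the roots. -/
theorem exists_mem_coe_eq_levelUnion_of_iUnion_subset [NeZero V]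
    {S : Set (Fin V → NonemptyCompacts X)} (hne : S.Nonempty)
    (hS : (⋃ a, applyIFS f hf a '' S) ⊆ S) (k : ℕ) :
    ∀ c, c * M ^ k ≤ V → ∀ σ : ℕ → CodeTree M N,
      ∃ ω ∈ S, ∃ K : ℕ → List (Fin M) → NonemptyCompacts X,
        ∀ v < c, (ω (Fin.ofNat V v) : Set X) = levelUnion f k (σ v) fun i => K v i := by
  induction k with
  | zero =>
    obtain ⟨ω, hω⟩ := hne
    exact fun _ _ _ => ⟨ω, hω, fun v _ => ω (Fin.ofNat V v),
      fun v _ => (levelUnion_zero f _ fun _ => (ω (Fin.ofNat V v) : Set X)).symm⟩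
  | succ k ih =>
    intro c hc σ
    have hM : 0 < M := Nat.pos_of_ne_zero (NeZero.ne M)
    obtain ⟨ω, hω, K, hK⟩ := ih (c * M) (by rw [pow_succ] at hc; linarith)
      fun j => (σ (j / M)).subtree [Fin.ofNat M j]
    let a : IdxA M N V := fun w => (σ w [], fun m => Fin.ofNat V (w * M + m))
    refine ⟨applyIFS f hf a ω, hS (mem_iUnion.mpr ⟨a, mem_image_of_mem _ hω⟩),
      fun v i => K (v * M + i.headD 0) i.tail, fun v hv => ?_⟩
    have hvV : (Fin.ofNat V v : ℕ) = v := by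
      rw [Fin.val_ofNat]
      refine Nat.mod_eq_of_lt ?_
      calc v < c := hv
        _ ≤ c * M ^ (k + 1) := Nat.le_mul_of_pos_right c (pow_pos hM _)
        _ ≤ V := hc
    rw [levelUnion_succ]
    refine iUnion_congr fun m => ?_
    have hchild : v * M + m < c * M := by nlinarith [m.isLt]
    have hdiv : (v * M + m) / M = v := by
      rw [Nat.add_comm, Nat.add_mul_div_right _ _ hM, Nat.div_eq_of_lt m.isLt, zero_add]
    have hmod : Fin.ofNat M (v * M + m) = m := by
      ext
      simp [Nat.mod_eq_of_lt m.isLt]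
    change f (σ (Fin.ofNat V v) []) m ''
      (ω (Fin.ofNat V ((Fin.ofNat V v : ℕ) * M + m)) : Set X) = _
    rw [hvV, hK _ hchild, hdiv, hmod]
    rfl

end Attractor

theorem stmt_19_general {X : Type*} [MetricSpace X] [CompactSpace X]
    {M N : ℕ} [NeZero M] (hN : 0 < N)
    (f : Fin N → Fin M → X → X) (l : NNReal) (hl : l < 1)
    (hf : ∀ n m, LipschitzWith l (f n m))
    (Fc : CodeTree M N → NonemptyCompacts X)
    (hFc : ∀ (σ : CodeTree M N) (K : Set X), K.Nonempty → IsCompact K →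
      Tendsto (fun k => hausdorffDist
          (⋃ (i : List (Fin M)) (_ : i.length = k), treeComp f i σ '' K) (Fc σ : Set X))
        atTop (nhds 0))
    (HV : ∀ V : ℕ, Set (Fin V → NonemptyCompacts X))
    (hHV : ∀ V : ℕ, 0 < V →
      (HV V).Nonempty ∧ IsCompact (HV V) ∧
      HV V = (⋃ a : IdxA M N V, applyIFS f (fun n m => (hf n m).continuous) a '' HV V) ∧
      (∀ S : Set (Fin V → NonemptyCompacts X), S.Nonempty → IsCompact S →
        S = ⋃ a : IdxA M N V, applyIFS f (fun n m => (hf n m).continuous) a '' S →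
        S = HV V)) :
    ∀ ε : ℝ, 0 < ε → ∃ V₀ : ℕ, 0 < V₀ ∧ ∀ V : ℕ, V₀ ≤ V →
      hausdorffDist
        {K : NonemptyCompacts X | ∃ ω ∈ HV V, ∃ v : Fin V, (v : ℕ) = 0 ∧ ω v = K}
        (Set.range Fc) < ε := by
  intro ε hε
  obtain ⟨k, hk⟩ := (((tendsto_pow_atTop_nhds_zero_of_lt_one l.coe_nonneg hl).mul_const
    (diam (univ : Set X))).eventually (gt_mem_nhds (by simpa using hε))).exists
  have hM : 0 < M ^ k := pow_pos (Nat.pos_of_ne_zero (NeZero.ne M)) k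
  refine ⟨M ^ k, hM, fun V hV => ?_⟩
  have : NeZero V := ⟨by omega⟩
  obtain ⟨hne, -, heq, -⟩ := hHV V (by omega)
  have hclose : ∀ σ (K : List (Fin M) → NonemptyCompacts X),
      hausdorffDist (levelUnion f k σ fun i => K i) (Fc σ) ≤ l ^ k * diam (univ : Set X) :=
    fun σ K => hausdorffDist_levelUnion_le_of_tendsto f hf σ (Fc σ).nonempty
      (hFc σ _ (Fc σ).nonempty (Fc σ).isCompact) k fun i => (K i).nonempty
  refine (hausdorffDist_le_of_mem_dist (by positivity) ?_ ?_).trans_lt hk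
  · rintro _ ⟨ω, hω, v, -, rfl⟩
    obtain ⟨σ, K, hσK⟩ :=
      exists_coe_eq_levelUnion_of_subset_iUnion f _ hN heq.subset k ω hω v
    exact ⟨Fc σ, mem_range_self σ, by rw [NonemptyCompacts.dist_eq, hσK]; exact hclose σ K⟩
  · rintro _ ⟨σ, rfl⟩
    obtain ⟨ω, hω, K, hK⟩ := exists_mem_coe_eq_levelUnion_of_iUnion_subset f _ hne
      heq.symm.subset k 1 (by simpa using hV) fun _ => σ
    refine ⟨ω (Fin.ofNat V 0), ⟨ω, hω, _, by simp, rfl⟩, ?_⟩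
    rw [NonemptyCompacts.dist_eq, hausdorffDist_comm, hK 0 one_pos]
    exact hclose σ (K 0)

/-- **Superfractals converge to the set of random fractals.** Let `H = F(Ω)` be the set
of random fractal sets of the superIFS, where `F : Ω → H(X)` is the coding map, and for
each `V ≥ 1` let `H_{V,1}` be the superfractal, the set of first components of the set
attractor `H_V` of the IFS `{H(X)^V; f^a, a ∈ A}`.  Then `H_{V,1} → H` as `V → ∞` in the
Hausdorff metric on `H(H(X))`: for every `ε > 0` there is `V₀` such that for all
`V ≥ V₀` the Hausdorff distance between `H_{V,1}` and `H` in `(H(X), d_H)` is less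
than `ε`. -/
theorem stmt_19 {X : Type*} [MetricSpace X] [CompactSpace X] [Nonempty X]
    {M N : ℕ} [NeZero M] (hN : 0 < N)
    (f : Fin N → Fin M → X → X) (l : NNReal) (hl : l < 1)
    (hf : ∀ n m, LipschitzWith l (f n m))
    (p : Fin N → Fin M → NNReal) (hp : ∀ n, ∑ m, p n m = 1)
    (Fc : CodeTree M N → NonemptyCompacts X)
    (hFc : ∀ (σ : CodeTree M N) (K : Set X), K.Nonempty → IsCompact K →
      Tendsto (fun k => hausdorffDist
          (⋃ (i : List (Fin M)) (_ : i.length = k), treeComp f i σ '' K) (Fc σ : Set X))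
        atTop (nhds 0))
    (HV : ∀ V : ℕ, Set (Fin V → NonemptyCompacts X))
    (hHV : ∀ V : ℕ, 0 < V →
      (HV V).Nonempty ∧ IsCompact (HV V) ∧
      HV V = (⋃ a : IdxA M N V, applyIFS f (fun n m => (hf n m).continuous) a '' HV V) ∧
      (∀ S : Set (Fin V → NonemptyCompacts X), S.Nonempty → IsCompact S →
        S = ⋃ a : IdxA M N V, applyIFS f (fun n m => (hf n m).continuous) a '' S →
        S = HV V)) :
    ∀ ε : ℝ, 0 < ε → ∃ V₀ : ℕ, 0 < V₀ ∧ ∀ V : ℕ, V₀ ≤ V →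
      hausdorffDist
        {K : NonemptyCompacts X | ∃ ω ∈ HV V, ∃ v : Fin V, (v : ℕ) = 0 ∧ ω v = K}
        (Set.range Fc) < ε :=
  stmt_19_general hN f l hl hf Fc hFc HV hHV
end
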